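/- arXiv:cs/0512031 — 6 statements merged into one kernel-verified Lean document; each statement's English description precedes it below -/
import Mathlib

section
/- The class of timed languages accepted by alternating timed automata is effectively closed under union, intersection and complementation; moreover, for each of these boolean operations the resulting automaton can be chosen so that its number of clocks does not exceed the maximum number of clocks of the input automata (in particular, complementation does not increase the number of clocks). -/
/-- Clock constraints over a set `C` of clocks: comparisons with natural
number constants, closed under conjunction and negation. -/
inductive ClockConstraint (C : Type) : Type where
  | lt : C → ℕ → ClockConstraint C
  | le : C → ℕ → ClockConstraint C
  | conj : ClockConstraint C → ClockConstraint C → ClockConstraint C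
  | neg : ClockConstraint C → ClockConstraint C

/-- Satisfaction of a clock constraint by a clock valuation. -/
def ClockConstraint.sat {C : Type} (v : C → NNReal) : ClockConstraint C → Prop
  | .lt x c => (v x : ℝ) < (c : ℝ)
  | .le x c => (v x : ℝ) ≤ (c : ℝ)
  | .conj s t => s.sat v ∧ t.sat v
  | .neg s => ¬ s.sat v

/-- Positive boolean formulas over a set `X` of propositions. -/
inductive PosBool (X : Type) : Type where
  | atom : X → PosBool X
  | conj : PosBool X → PosBool X → PosBool X
  | disj : PosBool X → PosBool X → PosBool X

/-- Evaluation of a positive boolean formula under a valuation of atoms. -/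
def PosBool.eval {X : Type} (f : X → Prop) : PosBool X → Prop
  | .atom x => f x
  | .conj b c => b.eval f ∧ c.eval f
  | .disj b c => b.eval f ∨ c.eval f

/-- A positive boolean formula is disjunction-free (purely conjunctive). -/
def PosBool.orFree {X : Type} : PosBool X → Prop
  | .atom _ => True
  | .conj b c => b.orFree ∧ c.orFree
  | .disj _ _ => False

/-- A positive boolean formula is conjunction-free (purely disjunctive). -/
def PosBool.andFree {X : Type} : PosBool X → Prop
  | .atom _ => True
  | .conj _ _ => False
  | .disj b c => b.andFree ∧ c.andFree

open Classical in
/-- Reset the clocks in `r` to zero. -/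
noncomputable def resetVal {C : Type} (v : C → NNReal) (r : Set C) : C → NNReal :=
  fun x => if x ∈ r then 0 else v x

/-- A (finite) timed word: each letter comes with the delay elapsed since the
previous letter (a nonnegative real). -/
abbrev TimedWord (A : Type) : Type := List (A × NNReal)
/-- An alternating timed automaton with input alphabet `A`, clocks `C`,
locations `Q`.  The transition function is given, for each location and
letter, by a finite list of (guard, positive boolean formula) pairs; the
`partition` field is the Partition condition: for every location, letter and
clock valuation there is exactly one defined guard satisfied by the
valuation. -/
structure ATA (A C Q : Type) where
  init : Q
  accept : Set Q
  trans : Q → A → List (ClockConstraint C × PosBool (Q × Set C))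
  partition : ∀ (q : Q) (a : A) (v : C → NNReal),
    ∃! gb : ClockConstraint C × PosBool (Q × Set C), gb ∈ trans q a ∧ gb.1.sat v

/-- Acceptance of a timed word from a given configuration, defined by
recursion on the word: this is exactly the existence of a winning strategy
for Eve in the acceptance game (Eve resolves disjunctions, Adam
conjunctions), and Eve wins iff the final location is accepting. -/
def ATA.AccFrom {A C Q : Type} (M : ATA A C Q) : TimedWord A → Q → (C → NNReal) → Prop
  | [], q, _ => q ∈ M.accept
  | (a, t) :: w, q, v =>
      ∃ gb ∈ M.trans q a, gb.1.sat (fun x => v x + t) ∧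
        gb.2.eval (fun qr => M.AccFrom w qr.1 (resetVal (fun x => v x + t) qr.2))

/-- The timed language of an alternating timed automaton. -/
def ATA.lang {A C Q : Type} (M : ATA A C Q) : Set (TimedWord A) :=
  { w | M.AccFrom w M.init (fun _ => 0) }

/-- A purely universal ATA: no disjunction occurs in the transition formulas. -/
def ATA.PurelyUniversal {A C Q : Type} (M : ATA A C Q) : Prop :=
  ∀ (q : Q) (a : A), ∀ gb ∈ M.trans q a, gb.2.orFree

/-- A purely existential ATA: no conjunction occurs in the transition formulas. -/
def ATA.PurelyExistential {A C Q : Type} (M : ATA A C Q) : Prop :=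
  ∀ (q : Q) (a : A), ∀ gb ∈ M.trans q a, gb.2.andFree

/-! Dualising an ATA (swapping `∧` and `∨` in every transition formula and complementing the
accepting set) complements its language: by the Partition condition exactly one guard applies
at each step, so the existential choice of a guard in `AccFrom` is also a universal one, and the
negation can be pushed through each step. Intersection runs both automata from a fresh initial
location that reads the first letter under the conjunction of an initial guard of each, and
union follows by De Morgan. Both inputs are made to share the clocks `Fin (max n₁ n₂)` by an
injective renaming, which does not change the language. -/

namespace List

variable {α β γ : Type}

theorem existsUnique_mem_map {l : List α} {p : α → Prop} {q : β → Prop} (g : α → β)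
    (hg : ∀ x, q (g x) ↔ p x) (h : ∃! x, x ∈ l ∧ p x) : ∃! y, y ∈ l.map g ∧ q y := by
  obtain ⟨x, ⟨hx, hpx⟩, hu⟩ := h
  refine ⟨g x, ⟨mem_map_of_mem hx, (hg x).2 hpx⟩, ?_⟩
  rintro _ ⟨hy, hqy⟩
  obtain ⟨x', hx', rfl⟩ := mem_map.1 hy
  rw [hu x' ⟨hx', (hg x').1 hqy⟩]

theorem existsUnique_mem_product {l₁ : List α} {l₂ : List β} {p : α → Prop} {q : β → Prop}
    (h₁ : ∃! x, x ∈ l₁ ∧ p x) (h₂ : ∃! y, y ∈ l₂ ∧ q y) :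
    ∃! z, z ∈ l₁ ×ˢ l₂ ∧ p z.1 ∧ q z.2 := by
  obtain ⟨x, ⟨hx, hpx⟩, hu₁⟩ := h₁
  obtain ⟨y, ⟨hy, hqy⟩, hu₂⟩ := h₂
  refine ⟨(x, y), ⟨pair_mem_product.2 ⟨hx, hy⟩, hpx, hqy⟩, ?_⟩
  rintro ⟨x', y'⟩ ⟨hz, hpx', hqy'⟩
  obtain ⟨hx', hy'⟩ := pair_mem_product.1 hz
  rw [hu₁ x' ⟨hx', hpx'⟩, hu₂ y' ⟨hy', hqy'⟩]

theorem exists_mem_product_iff {l₁ : List α} {l₂ : List β} {p : α → Prop} {q : β → Prop} :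
    (∃ z ∈ l₁ ×ˢ l₂, p z.1 ∧ q z.2) ↔ (∃ x ∈ l₁, p x) ∧ ∃ y ∈ l₂, q y := by
  constructor
  · rintro ⟨⟨x, y⟩, hxy, hpx, hqy⟩
    obtain ⟨hx, hy⟩ := pair_mem_product.1 hxy
    exact ⟨⟨x, hx, hpx⟩, y, hy, hqy⟩
  · rintro ⟨⟨x, hx, hpx⟩, y, hy, hqy⟩
    exact ⟨(x, y), pair_mem_product.2 ⟨hx, hy⟩, hpx, hqy⟩

end List

namespace ClockConstraint

variable {C C' : Type}

def map (f : C → C') : ClockConstraint C → ClockConstraint C'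
  | lt x c => lt (f x) c
  | le x c => le (f x) c
  | conj s t => conj (s.map f) (t.map f)
  | neg s => neg (s.map f)

theorem sat_map (f : C → C') (v : C' → NNReal) (g : ClockConstraint C) :
    (g.map f).sat v ↔ g.sat (v ∘ f) := by
  induction g <;> simp [map, sat, *]

end ClockConstraint

namespace PosBool

variable {X Y : Type}

def map (h : X → Y) : PosBool X → PosBool Y
  | atom x => atom (h x)
  | conj b c => conj (b.map h) (c.map h)
  | disj b c => disj (b.map h) (c.map h)

theorem eval_map (h : X → Y) (f : Y → Prop) (b : PosBool X) :
    (b.map h).eval f ↔ b.eval (f ∘ h) := by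
  induction b <;> simp [map, eval, *]

theorem eval_congr {f g : X → Prop} (hfg : ∀ x, f x ↔ g x) (b : PosBool X) :
    b.eval f ↔ b.eval g := by
  rw [funext fun x => propext (hfg x)]

def dual : PosBool X → PosBool X
  | atom x => atom x
  | conj b c => disj b.dual c.dual
  | disj b c => conj b.dual c.dual

theorem eval_dual (f : X → Prop) (b : PosBool X) :
    b.dual.eval f ↔ ¬ b.eval (fun x => ¬ f x) := by
  induction b <;> simp only [dual, eval, not_and_or, not_or, not_not, *]

end PosBool

theorem resetVal_image_comp {C C' : Type} {f : C → C'} (hf : Function.Injective f)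
    (v : C' → NNReal) (r : Set C) : resetVal v (f '' r) ∘ f = resetVal (v ∘ f) r := by
  ext x
  by_cases hx : x ∈ r <;> simp [resetVal, hx, hf.mem_set_image]

namespace ATA

variable {A C C' Q Q₁ Q₂ : Type}

theorem accFrom_cons_iff_forall (M : ATA A C Q) (a : A) (t : NNReal) (w : TimedWord A) (q : Q)
    (v : C → NNReal) :
    M.AccFrom ((a, t) :: w) q v ↔ ∀ gb ∈ M.trans q a, gb.1.sat (fun x => v x + t) →
      gb.2.eval (fun qr => M.AccFrom w qr.1 (resetVal (fun x => v x + t) qr.2)) := by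
  obtain ⟨gb, ⟨hgb, hsat⟩, hu⟩ := M.partition q a (fun x => v x + t)
  refine ⟨fun ⟨gb', hgb', hsat', heval⟩ gb'' hgb'' hsat'' => ?_,
    fun h => ⟨gb, hgb, hsat, h gb hgb hsat⟩⟩
  rwa [hu gb'' ⟨hgb'', hsat''⟩, ← hu gb' ⟨hgb', hsat'⟩]

theorem accFrom_iff_of_trans_eq_map {Q' : Type} {M : ATA A C Q} {N : ATA A C Q'} (f : Q → Q')
    (h_accept : ∀ q, f q ∈ N.accept ↔ q ∈ M.accept)
    (h_trans : ∀ q a,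
      N.trans (f q) a = (M.trans q a).map (Prod.map id (PosBool.map (Prod.map f id)))) :
    ∀ (w : TimedWord A) (q : Q) (v : C → NNReal), N.AccFrom w (f q) v ↔ M.AccFrom w q v
  | [], q, _ => h_accept q
  | (a, t) :: w, q, v => by
    simp only [AccFrom, h_trans, List.mem_map, exists_exists_and_eq_and, Prod.map_fst,
      Prod.map_snd, id, PosBool.eval_map]
    refine exists_congr fun gb => and_congr_right fun _ => and_congr_right fun _ =>
      PosBool.eval_congr
        (fun qr : Q × Set C => accFrom_iff_of_trans_eq_map f h_accept h_trans w qr.1 _) _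

def mapClocks (M : ATA A C Q) (f : C → C') : ATA A C' Q where
  init := M.init
  accept := M.accept
  trans q a := (M.trans q a).map fun gb => (gb.1.map f, gb.2.map (Prod.map id (f '' ·)))
  partition q a v := List.existsUnique_mem_map _ (fun gb => gb.1.sat_map f v)
    (M.partition q a (v ∘ f))

theorem mapClocks_trans (M : ATA A C Q) (f : C → C') (q : Q) (a : A) :
    (M.mapClocks f).trans q a =
      (M.trans q a).map fun gb => (gb.1.map f, gb.2.map (Prod.map id (f '' ·))) :=
  rfl

theorem accFrom_mapClocks (M : ATA A C Q) {f : C → C'} (hf : Function.Injective f) :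
    ∀ (w : TimedWord A) (q : Q) (v : C' → NNReal),
      (M.mapClocks f).AccFrom w q v ↔ M.AccFrom w q (v ∘ f)
  | [], _, _ => Iff.rfl
  | (a, t) :: w, q, v => by
    simp only [AccFrom, mapClocks_trans, List.mem_map, exists_exists_and_eq_and,
      ClockConstraint.sat_map, PosBool.eval_map]
    refine exists_congr fun gb => and_congr_right fun _ => and_congr_right fun _ =>
      PosBool.eval_congr (fun qr => ?_) _
    rw [Function.comp_apply, accFrom_mapClocks M hf w, Prod.map_snd, resetVal_image_comp hf]
    rfl

theorem lang_mapClocks (M : ATA A C Q) {f : C → C'} (hf : Function.Injective f) :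
    (M.mapClocks f).lang = M.lang :=
  Set.ext fun w => M.accFrom_mapClocks hf w M.init _

def dual (M : ATA A C Q) : ATA A C Q where
  init := M.init
  accept := M.acceptᶜ
  trans q a := (M.trans q a).map (Prod.map id PosBool.dual)
  partition q a v := List.existsUnique_mem_map _ (fun _ => Iff.rfl) (M.partition q a v)

theorem dual_trans (M : ATA A C Q) (q : Q) (a : A) :
    M.dual.trans q a = (M.trans q a).map (Prod.map id PosBool.dual) :=
  rfl

theorem accFrom_dual (M : ATA A C Q) :
    ∀ (w : TimedWord A) (q : Q) (v : C → NNReal), M.dual.AccFrom w q v ↔ ¬ M.AccFrom w q v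
  | [], _, _ => Iff.rfl
  | (a, t) :: w, q, v => by
    rw [accFrom_cons_iff_forall M]
    simp only [AccFrom, dual_trans, List.mem_map, exists_exists_and_eq_and, Prod.map_fst,
      Prod.map_snd, id, PosBool.eval_dual, accFrom_dual M w, not_not]
    push Not
    rfl

theorem lang_dual (M : ATA A C Q) : M.dual.lang = M.langᶜ :=
  Set.ext fun w => M.accFrom_dual w M.init _

def inter (M₁ : ATA A C Q₁) (M₂ : ATA A C Q₂) : ATA A C (Option (Q₁ ⊕ Q₂)) where
  init := none
  accept := {x | x.elim (M₁.init ∈ M₁.accept ∧ M₂.init ∈ M₂.accept)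
    (Sum.elim (· ∈ M₁.accept) (· ∈ M₂.accept))}
  trans x a := match x with
    | none => ((M₁.trans M₁.init a) ×ˢ (M₂.trans M₂.init a)).map fun p =>
        (.conj p.1.1 p.2.1, .conj (p.1.2.map (Prod.map (some ∘ .inl) id))
          (p.2.2.map (Prod.map (some ∘ .inr) id)))
    | some (.inl q) => (M₁.trans q a).map (Prod.map id (PosBool.map (Prod.map (some ∘ .inl) id)))
    | some (.inr q) => (M₂.trans q a).map (Prod.map id (PosBool.map (Prod.map (some ∘ .inr) id)))
  partition x a v := match x with
    | none => List.existsUnique_mem_map _ (fun _ => Iff.rfl)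
        (List.existsUnique_mem_product (M₁.partition M₁.init a v) (M₂.partition M₂.init a v))
    | some (.inl q) => List.existsUnique_mem_map _ (fun _ => Iff.rfl) (M₁.partition q a v)
    | some (.inr q) => List.existsUnique_mem_map _ (fun _ => Iff.rfl) (M₂.partition q a v)

theorem inter_trans_none (M₁ : ATA A C Q₁) (M₂ : ATA A C Q₂) (a : A) :
    (M₁.inter M₂).trans none a = ((M₁.trans M₁.init a) ×ˢ (M₂.trans M₂.init a)).map fun p =>
      (.conj p.1.1 p.2.1, .conj (p.1.2.map (Prod.map (some ∘ .inl) id))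
        (p.2.2.map (Prod.map (some ∘ .inr) id))) :=
  rfl

theorem accFrom_inter_inl (M₁ : ATA A C Q₁) (M₂ : ATA A C Q₂) (w : TimedWord A) (q : Q₁)
    (v : C → NNReal) : (M₁.inter M₂).AccFrom w (some (.inl q)) v ↔ M₁.AccFrom w q v :=
  accFrom_iff_of_trans_eq_map (some ∘ Sum.inl) (fun _ => Iff.rfl) (fun _ _ => rfl) w q v

theorem accFrom_inter_inr (M₁ : ATA A C Q₁) (M₂ : ATA A C Q₂) (w : TimedWord A) (q : Q₂)
    (v : C → NNReal) : (M₁.inter M₂).AccFrom w (some (.inr q)) v ↔ M₂.AccFrom w q v :=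
  accFrom_iff_of_trans_eq_map (some ∘ Sum.inr) (fun _ => Iff.rfl) (fun _ _ => rfl) w q v

theorem accFrom_inter_none (M₁ : ATA A C Q₁) (M₂ : ATA A C Q₂) :
    ∀ (w : TimedWord A) (v : C → NNReal),
      (M₁.inter M₂).AccFrom w none v ↔ M₁.AccFrom w M₁.init v ∧ M₂.AccFrom w M₂.init v
  | [], _ => Iff.rfl
  | (a, t) :: w, v => by
    simp only [AccFrom, inter_trans_none, List.mem_map, exists_exists_and_eq_and,
      ClockConstraint.sat, PosBool.eval, PosBool.eval_map, Function.comp_def, Prod.map_fst,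
      Prod.map_snd, id, accFrom_inter_inl, accFrom_inter_inr]
    rw [← List.exists_mem_product_iff]
    exact exists_congr fun _ => and_congr_right fun _ => and_and_and_comm

theorem lang_inter (M₁ : ATA A C Q₁) (M₂ : ATA A C Q₂) :
    (M₁.inter M₂).lang = M₁.lang ∩ M₂.lang :=
  Set.ext fun w => accFrom_inter_none M₁ M₂ w _

end ATA

theorem ata_closed_under_boolean_operations_general
    {A Q₁ Q₂ : Type} [Fintype Q₁] [Fintype Q₂] {n₁ n₂ : ℕ}
    (M₁ : ATA A (Fin n₁) Q₁) (M₂ : ATA A (Fin n₂) Q₂) :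
    (∃ (Q : Type) (_ : Fintype Q) (n : ℕ) (M : ATA A (Fin n) Q),
        n ≤ max n₁ n₂ ∧ M.lang = M₁.lang ∪ M₂.lang) ∧
    (∃ (Q : Type) (_ : Fintype Q) (n : ℕ) (M : ATA A (Fin n) Q),
        n ≤ max n₁ n₂ ∧ M.lang = M₁.lang ∩ M₂.lang) ∧
    (∃ (Q : Type) (_ : Fintype Q) (n : ℕ) (M : ATA A (Fin n) Q),
        n ≤ n₁ ∧ M.lang = M₁.langᶜ) := by
  set N₁ := M₁.mapClocks (Fin.castLE (le_max_left n₁ n₂))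
  set N₂ := M₂.mapClocks (Fin.castLE (le_max_right n₁ n₂))
  have hN₁ : N₁.lang = M₁.lang := M₁.lang_mapClocks (Fin.castLE_injective _)
  have hN₂ : N₂.lang = M₂.lang := M₂.lang_mapClocks (Fin.castLE_injective _)
  refine ⟨⟨_, inferInstance, _, (N₁.dual.inter N₂.dual).dual, le_rfl, ?_⟩,
    ⟨_, inferInstance, _, N₁.inter N₂, le_rfl, ?_⟩,
    ⟨_, inferInstance, _, M₁.dual, le_rfl, M₁.lang_dual⟩⟩
  · rw [ATA.lang_dual, ATA.lang_inter, ATA.lang_dual, ATA.lang_dual, hN₁, hN₂, Set.compl_inter,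
      compl_compl, compl_compl]
  · rw [ATA.lang_inter, hN₁, hN₂]

/-- The class of timed languages accepted by alternating
timed automata is closed under union, intersection and complementation, and
for each boolean operation the resulting automaton can be chosen with at
most `max` of the numbers of clocks of the inputs (for complementation, at
most the number of clocks of the input). -/
theorem ata_closed_under_boolean_operations
    {A Q₁ Q₂ : Type} [Fintype A] [Fintype Q₁] [Fintype Q₂] {n₁ n₂ : ℕ}
    (M₁ : ATA A (Fin n₁) Q₁) (M₂ : ATA A (Fin n₂) Q₂) :
    (∃ (Q : Type) (_ : Fintype Q) (n : ℕ) (M : ATA A (Fin n) Q),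
        n ≤ max n₁ n₂ ∧ M.lang = M₁.lang ∪ M₂.lang) ∧
    (∃ (Q : Type) (_ : Fintype Q) (n : ℕ) (M : ATA A (Fin n) Q),
        n ≤ max n₁ n₂ ∧ M.lang = M₁.lang ∩ M₂.lang) ∧
    (∃ (Q : Type) (_ : Fintype Q) (n : ℕ) (M : ATA A (Fin n) Q),
        n ≤ n₁ ∧ M.lang = M₁.langᶜ) :=
  ata_closed_under_boolean_operations_general M₁ M₂
end

section
/- For a one-clock alternating timed automaton A with transition formulas in disjunctive normal form: L(A) is nonempty if and only if there is a path in the untimed transition system T̂ from the initial state P₀ = {(q₀, 0)} to a bad state. -/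
/-- A one-clock alternating timed automaton whose transition formulas are in
disjunctive normal form: for each location and letter, a finite list of
pairs (guard, DNF), where a DNF is a nonempty list of disjuncts, each
disjunct a nonempty list of atoms `(target location, reset flag)`.  The
`partition` field is the Partition condition. -/
structure ATA1 (A Q : Type) where
  init : Q
  accept : Set Q
  trans : Q → A → List (ClockConstraint Unit × List (List (Q × Bool)))
  partition : ∀ (q : Q) (a : A) (v : NNReal),
    ∃! gb : ClockConstraint Unit × List (List (Q × Bool)),
      gb ∈ trans q a ∧ gb.1.sat (fun _ => v)
  dnf_nonempty : ∀ (q : Q) (a : A), ∀ gb ∈ trans q a,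
    gb.2 ≠ [] ∧ ∀ d ∈ gb.2, d ≠ []

/-- Acceptance of a timed word (delay time-stamps) from a configuration:
Eve picks a disjunct, and all its atoms must accept the rest of the word. -/
def ATA1.AccFrom {A Q : Type} (M : ATA1 A Q) : TimedWord A → Q → NNReal → Prop
  | [], q, _ => q ∈ M.accept
  | (a, t) :: w, q, v =>
      ∃ gb ∈ M.trans q a, gb.1.sat (fun _ => v + t) ∧
        ∃ d ∈ gb.2, ∀ qb ∈ d, M.AccFrom w qb.1 (if qb.2 then 0 else v + t)

/-- The timed language of a one-clock DNF alternating timed automaton. -/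
def ATA1.lang {A Q : Type} (M : ATA1 A Q) : Set (TimedWord A) :=
  { w | M.AccFrom w M.init 0 }

/-- One transition of the transition system `T`: states are finite sets of
configurations `(q, v)`; on `(a, t)` every configuration advances by `t`,
one disjunct of the (unique) applicable transition formula is chosen for
each configuration, and the resulting configurations are collected. -/
def ATA1.Tstep {A Q : Type} (M : ATA1 A Q) (a : A) (t : NNReal)
    (P P' : Set (Q × NNReal)) : Prop :=
  ∃ choice : Q × NNReal → List (Q × Bool),
    (∀ c ∈ P, ∃ gb ∈ M.trans c.1 a, gb.1.sat (fun _ => c.2 + t) ∧ choice c ∈ gb.2) ∧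
    P' = ⋃ c ∈ P, { c' | ∃ qb ∈ choice c, c' = (qb.1, if qb.2 then 0 else c.2 + t) }

/-- A transition of the untimed transition system `T̂`: a transition of `T`
with the time information erased. -/
def ATA1.UStep {A Q : Type} (M : ATA1 A Q) (a : A) (P P' : Set (Q × NNReal)) : Prop :=
  ∃ t : NNReal, M.Tstep a t P P'

/-- A state of `T` (or `T̂`) is bad iff all its locations are accepting. -/
def ATA1.Bad {A Q : Type} (M : ATA1 A Q) (P : Set (Q × NNReal)) : Prop :=
  ∀ c ∈ P, c.1 ∈ M.accept

open Classical in
lemma ATA1.acc_to_bad {A Q : Type} (M : ATA1 A Q) (w : TimedWord A) :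
    ∀ P : Set (Q × NNReal), (∀ c ∈ P, M.AccFrom w c.1 c.2) →
    ∃ P', Relation.ReflTransGen (fun P₁ P₂ => ∃ a, M.UStep a P₁ P₂) P P' ∧ M.Bad P' := by
  induction w with
  | nil => exact fun P h => ⟨P, Relation.ReflTransGen.refl, h⟩
  | cons at' w ih =>
    obtain ⟨a, t⟩ := at'
    intro P h
    choose gb hgb hsat d hd hall using h
    set choice : Q × NNReal → List (Q × Bool) :=
      fun c => if hc : c ∈ P then d c hc else [] with hchoice
    set P' : Set (Q × NNReal) :=
      ⋃ c ∈ P, { c' | ∃ qb ∈ choice c, c' = (qb.1, if qb.2 then 0 else c.2 + t) } with hP'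
    have hstep : M.Tstep a t P P' := by
      refine ⟨choice, fun c hc => ⟨gb c hc, hgb c hc, hsat c hc, ?_⟩, rfl⟩
      simp only [hchoice, dif_pos hc]
      exact hd c hc
    have hacc : ∀ c' ∈ P', M.AccFrom w c'.1 c'.2 := by
      intro c' hc'
      rw [hP', Set.mem_iUnion₂] at hc'
      obtain ⟨c, hc, qb, hqb, rfl⟩ := hc'
      simp only [hchoice, dif_pos hc] at hqb
      exact hall c hc qb hqb
    obtain ⟨P'', hpath, hbad⟩ := ih P' hacc
    exact ⟨P'', Relation.ReflTransGen.head ⟨a, t, hstep⟩ hpath, hbad⟩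

lemma ATA1.bad_to_acc {A Q : Type} (M : ATA1 A Q) (P P' : Set (Q × NNReal))
    (hpath : Relation.ReflTransGen (fun P₁ P₂ => ∃ a, M.UStep a P₁ P₂) P P')
    (hbad : M.Bad P') : ∃ w, ∀ c ∈ P, M.AccFrom w c.1 c.2 := by
  induction hpath using Relation.ReflTransGen.head_induction_on with
  | refl => exact ⟨[], hbad⟩
  | head hstep _ ih =>
    obtain ⟨w, hw⟩ := ih
    obtain ⟨a, t, choice, hch, rfl⟩ := hstep
    refine ⟨(a, t) :: w, fun c hc => ?_⟩
    obtain ⟨gb, hgb, hsat, hchd⟩ := hch c hc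
    refine ⟨gb, hgb, hsat, choice c, hchd, fun qb hqb => ?_⟩
    exact hw _ (Set.mem_biUnion hc ⟨qb, hqb, rfl⟩)

/-- For a one-clock alternating timed automaton with
transition formulas in disjunctive normal form, the language is nonempty iff
some bad state is reachable in the untimed transition system `T̂` from the
initial state `P₀ = {(q₀, 0)}`. -/
theorem lang_nonempty_iff_bad_reachable_untimed
    {A Q : Type} [Fintype A] [Fintype Q] (M : ATA1 A Q) :
    M.lang.Nonempty ↔
      ∃ P : Set (Q × NNReal),
        Relation.ReflTransGen (fun P₁ P₂ => ∃ a, M.UStep a P₁ P₂)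
          ({(M.init, 0)} : Set (Q × NNReal)) P ∧ M.Bad P := by
  constructor
  · rintro ⟨w, hw⟩
    obtain ⟨P', hpath, hbad⟩ := M.acc_to_bad w {(M.init, 0)} (by rintro c rfl; exact hw)
    exact ⟨P', hpath, hbad⟩
  · rintro ⟨P, hpath, hbad⟩
    obtain ⟨w, hw⟩ := M.bad_to_acc _ _ hpath hbad
    exact ⟨w, hw (M.init, 0) rfl⟩
end

section
/- For a one-clock alternating timed automaton A with transition formulas in disjunctive normal form: L(A) is nonempty if and only if a bad state is reachable in the region-abstracted transition system H from the initial state W₀ = H(P₀). -/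
/-- The largest constant occurring in a clock constraint. -/
def ClockConstraint.maxConst {C : Type} : ClockConstraint C → ℕ
  | .lt _ c => c
  | .le _ c => c
  | .conj s t => max s.maxConst t.maxConst
  | .neg s => s.maxConst

/-- The largest constant `c_max` occurring in the transition function. -/
noncomputable def ATA1.cmax {A Q : Type} [Fintype A] [Fintype Q] (M : ATA1 A Q) : ℕ :=
  Finset.univ.sup fun q : Q => Finset.univ.sup fun a : A =>
    ((M.trans q a).map fun gb => gb.1.maxConst).foldr max 0

open Classical in
/-- The index of the region of a clock value `v`, for maximal constant `K`:
the regions `{0}, (0,1), {1}, (1,2), …, {K}, (K,∞)` are numbered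
`0, 1, …, 2K, 2K+1`. -/
noncomputable def regIdx (K : ℕ) (v : NNReal) : ℕ :=
  if (K : NNReal) < v then 2 * K + 1
  else if (⌊v⌋₊ : NNReal) = v then 2 * ⌊v⌋₊ else 2 * ⌊v⌋₊ + 1

/-- `W = H(P)`: the word `W` over `Λ = 𝒫(Q × reg)` is obtained from the set
`P` of configurations by replacing each `(q, v)` by `(q, reg v, fract v)`,
sorting by the fractional parts, grouping configurations with equal
fractional parts into one letter, and forgetting the fractional parts. -/
def IsAbstraction {Q : Type} (K : ℕ) (P : Set (Q × NNReal))
    (W : List (Set (Q × ℕ))) : Prop :=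
  ∃ fs : List ℝ,
    fs.Pairwise (· < ·) ∧
    (∀ f : ℝ, f ∈ fs ↔ ∃ c ∈ P, Int.fract (c.2 : ℝ) = f) ∧
    W.length = fs.length ∧
    ∀ (i : ℕ) (hw : i < W.length) (hi : i < fs.length),
      W.get ⟨i, hw⟩ =
        { qr | ∃ c ∈ P, Int.fract (c.2 : ℝ) = fs.get ⟨i, hi⟩ ∧ qr = (c.1, regIdx K c.2) }

/-- A transition (labelled by letter `a`) of the region-abstracted transition
system `H`: there are states `P`, `P'` of `T̂` with a transition
`P --a--> P'` whose abstractions are the two given words. -/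
def HStep {A Q : Type} [Fintype A] [Fintype Q] (M : ATA1 A Q) (a : A)
    (W W' : List (Set (Q × ℕ))) : Prop :=
  ∃ P P' : Set (Q × NNReal), P.Finite ∧
    IsAbstraction M.cmax P W ∧ IsAbstraction M.cmax P' W' ∧ M.UStep a P P'

/-- A state of `H` is bad iff every location occurring in one of its letters
is accepting. -/
def BadW {Q : Type} (F : Set Q) (W : List (Set (Q × ℕ))) : Prop :=
  ∀ s ∈ W, ∀ qr ∈ s, qr.1 ∈ F

/-- The monotone domination ordering on words over a powerset alphabet:
`W₁ ⪯ W₂` iff there is a strictly increasing map of positions along which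
the letters of `W₁` are included in those of `W₂`. -/
def MonDom {X : Type} (W₁ W₂ : List (Set X)) : Prop :=
  ∃ f : Fin W₁.length → Fin W₂.length,
    StrictMono f ∧ ∀ i : Fin W₁.length, W₁.get i ⊆ W₂.get (f i)


/-!
Acceptance of a timed word from a set of configurations unfolds into a run of `T` ending in a
bad state, and abstracting the states of such a run gives a path of `H` to a bad word.
Conversely, consecutive steps of a path of `H` may be realised by different concrete states with
the same abstraction. Two finite sets with the same abstraction can be matched configuration by
configuration with region-equivalent clock values, and region equivalence is a time-abstract
simulation: guards cannot tell region-equivalent values apart, resets preserve the equivalence,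
and a delay on one side is answered by a delay on the other, found by the back-and-forth step for
finite partial order isomorphisms of `ℝ`. Walking back along the path, every concretisation of
its states therefore accepts some timed word.
-/

open scoped NNReal

section Floor

variable {R : Type*} [CommRing R] [LinearOrder R] [IsStrictOrderedRing R] [FloorRing R]

theorem Int.floor_sub_eq_ite (x y : R) :
    ⌊x - y⌋ = ⌊x⌋ - ⌊y⌋ - if Int.fract x < Int.fract y then 1 else 0 := by
  have hx := Int.floor_add_fract x
  have hy := Int.floor_add_fract y
  have := Int.fract_nonneg x
  have := Int.fract_nonneg y
  have := Int.fract_lt_one x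
  have := Int.fract_lt_one y
  rw [Int.floor_eq_iff]
  split_ifs <;> push_cast <;> constructor <;> linarith

theorem Int.floor_sub_congr {x y x' y' : R} (hx : ⌊x⌋ = ⌊x'⌋) (hy : ⌊y⌋ = ⌊y'⌋)
    (h : Int.fract x < Int.fract y ↔ Int.fract x' < Int.fract y') : ⌊x - y⌋ = ⌊x' - y'⌋ := by
  simp only [Int.floor_sub_eq_ite, hx, hy, h]

end Floor

theorem cmp_eq_cmp_of_lt_iff_of_lt_iff {α β : Type*} [LinearOrder α] [LinearOrder β]
    {x y : α} {x' y' : β} (h₁ : x < y ↔ x' < y') (h₂ : y < x ↔ y' < x') :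
    cmp x y = cmp x' y' := by
  simp only [cmp, cmpUsing, h₁, h₂]

section Regions

variable {K : ℕ} {v w : ℝ≥0}

theorem regIdx_of_lt (h : (K : ℝ≥0) < v) : regIdx K v = 2 * K + 1 := if_pos h

theorem regIdx_of_le (h : v ≤ K) : regIdx K v = ⌊v⌋₊ + ⌈v⌉₊ := by
  rw [regIdx, if_neg (not_lt.2 h)]
  split_ifs with hv
  · conv_rhs => rw [← hv]
    rw [Nat.floor_natCast, Nat.ceil_natCast, two_mul]
  · have hlt : ⌊v⌋₊ < ⌈v⌉₊ := Nat.cast_lt.1 <| lt_of_lt_of_le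
      ((Nat.floor_le (zero_le : 0 ≤ v)).lt_of_ne hv) (Nat.le_ceil v)
    have := Nat.ceil_le_floor_add_one v
    omega

theorem regIdx_le_two_mul_iff : regIdx K v ≤ 2 * K ↔ v ≤ K := by
  refine ⟨fun h => not_lt.1 fun hv => ?_, fun hv => ?_⟩
  · rw [regIdx_of_lt hv] at h
    omega
  · rw [regIdx_of_le hv]
    have := Nat.ceil_le.2 hv
    have := Nat.floor_le_ceil v
    omega

theorem le_iff_le_of_regIdx_eq (h : regIdx K v = regIdx K w) : v ≤ K ↔ w ≤ K := by
  rw [← regIdx_le_two_mul_iff, h, regIdx_le_two_mul_iff]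

theorem floor_eq_and_ceil_eq_of_regIdx_eq (hv : v ≤ K) (h : regIdx K v = regIdx K w) :
    ⌊v⌋₊ = ⌊w⌋₊ ∧ ⌈v⌉₊ = ⌈w⌉₊ := by
  have hw := (le_iff_le_of_regIdx_eq h).1 hv
  rw [regIdx_of_le hv, regIdx_of_le hw] at h
  have := Nat.floor_le_ceil v
  have := Nat.floor_le_ceil w
  have := Nat.ceil_le_floor_add_one v
  have := Nat.ceil_le_floor_add_one w
  omega

theorem intFloor_eq_and_intCeil_eq_of_regIdx_eq (hv : v ≤ K)
    (h : regIdx K v = regIdx K w) : ⌊(v : ℝ)⌋ = ⌊(w : ℝ)⌋ ∧ ⌈(v : ℝ)⌉ = ⌈(w : ℝ)⌉ := by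
  obtain ⟨hfloor, hceil⟩ := floor_eq_and_ceil_eq_of_regIdx_eq hv h
  rw [← Int.natCast_floor_eq_floor v.coe_nonneg, ← Int.natCast_floor_eq_floor w.coe_nonneg,
    ← Int.natCast_ceil_eq_ceil v.coe_nonneg, ← Int.natCast_ceil_eq_ceil w.coe_nonneg]
  exact ⟨congrArg _ hfloor, congrArg _ hceil⟩

theorem lt_iff_lt_of_regIdx_eq_of_le (h : regIdx K v = regIdx K w) {c : ℕ} (hc : c ≤ K) :
    v < c ↔ w < c := by
  by_cases hv : v ≤ K
  · rw [← Nat.floor_lt (zero_le : 0 ≤ v), ← Nat.floor_lt (zero_le : 0 ≤ w),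
      (floor_eq_and_ceil_eq_of_regIdx_eq hv h).1]
  · have hw := (le_iff_le_of_regIdx_eq h).not.1 hv
    have hc' : (c : ℝ≥0) ≤ K := by exact_mod_cast hc
    exact iff_of_false (fun hvc => hv (hvc.le.trans hc')) (fun hwc => hw (hwc.le.trans hc'))

theorem le_iff_le_of_regIdx_eq_of_le (h : regIdx K v = regIdx K w) {c : ℕ} (hc : c ≤ K) :
    v ≤ c ↔ w ≤ c := by
  by_cases hv : v ≤ K
  · rw [← Nat.ceil_le, ← Nat.ceil_le, (floor_eq_and_ceil_eq_of_regIdx_eq hv h).2]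
  · have hw := (le_iff_le_of_regIdx_eq h).not.1 hv
    have hc' : (c : ℝ≥0) ≤ K := by exact_mod_cast hc
    exact iff_of_false (fun hvc => hv (hvc.trans hc')) (fun hwc => hw (hwc.trans hc'))

theorem regIdx_eq_of_forall_lt_iff
    (h : ∀ c : ℕ, c ≤ K → (v < c ↔ w < c) ∧ ((c : ℝ≥0) < v ↔ (c : ℝ≥0) < w)) :
    regIdx K v = regIdx K w := by
  by_cases hv : v ≤ K
  · have hw : w ≤ K := not_lt.1 fun hw => not_lt.2 hv ((h K le_rfl).2.2 hw)
    have hfloor : ⌊v⌋₊ = ⌊w⌋₊ := eq_of_forall_le_iff fun c => by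
      by_cases hc : c ≤ K
      · rw [Nat.le_floor_iff (zero_le : 0 ≤ v), Nat.le_floor_iff (zero_le : 0 ≤ w), ← not_lt,
          ← not_lt, (h c hc).1]
      · have := Nat.floor_le_ceil v
        have := Nat.floor_le_ceil w
        have := Nat.ceil_le.2 hv
        have := Nat.ceil_le.2 hw
        omega
    have hceil : ⌈v⌉₊ = ⌈w⌉₊ := eq_of_forall_ge_iff fun c => by
      by_cases hc : c ≤ K
      · rw [Nat.ceil_le, Nat.ceil_le, ← not_lt, ← not_lt, (h c hc).2]
      · have := Nat.ceil_le.2 hv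
        have := Nat.ceil_le.2 hw
        omega
    rw [regIdx_of_le hv, regIdx_of_le hw, hfloor, hceil]
  · have hw : ¬ w ≤ K := fun hw => hv (not_lt.1 fun hv' => not_lt.2 hw ((h K le_rfl).2.1 hv'))
    rw [regIdx_of_lt (not_le.1 hv), regIdx_of_lt (not_le.1 hw)]

theorem ClockConstraint.sat_congr_of_regIdx_eq {C : Type} {u u' : C → ℝ≥0}
    (h : ∀ x, regIdx K (u x) = regIdx K (u' x)) :
    ∀ φ : ClockConstraint C, φ.maxConst ≤ K → (φ.sat u ↔ φ.sat u')
  | .lt x c, hc => by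
    replace hc : c ≤ K := hc
    simpa only [sat, ← NNReal.coe_natCast, NNReal.coe_lt_coe] using
      lt_iff_lt_of_regIdx_eq_of_le (h x) hc
  | .le x c, hc => by
    replace hc : c ≤ K := hc
    simpa only [sat, ← NNReal.coe_natCast, NNReal.coe_le_coe] using
      le_iff_le_of_regIdx_eq_of_le (h x) hc
  | .conj s t, hc => and_congr (sat_congr_of_regIdx_eq h s (le_of_max_le_left hc))
      (sat_congr_of_regIdx_eq h t (le_of_max_le_right hc))
  | .neg s, hc => not_congr (sat_congr_of_regIdx_eq h s hc)

end Regions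

theorem ATA1.maxConst_le_cmax {A Q : Type} [Fintype A] [Fintype Q] (M : ATA1 A Q) (q : Q) (a : A) :
    ∀ gb ∈ M.trans q a, gb.1.maxConst ≤ M.cmax := fun _ hgb =>
  (List.le_max_of_le' 0 (List.mem_map_of_mem hgb) le_rfl).trans <|
    (Finset.le_sup (f := fun a => ((M.trans q a).map fun gb => gb.1.maxConst).foldr max 0)
      (Finset.mem_univ a)).trans <|
    Finset.le_sup (f := fun q => Finset.univ.sup fun a =>
      ((M.trans q a).map fun gb => gb.1.maxConst).foldr max 0) (Finset.mem_univ q)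

/-- The classical region equivalence of two families of clock values, in a form that delays
visibly preserve: on the values below `K`, equal integer parts of all pairwise differences take
the place of agreement on the order of the fractional parts. -/
structure RegionEquiv (K : ℕ) {ι : Type*} (u u' : ι → ℝ≥0) : Prop where
  regIdx_eq : ∀ i, regIdx K (u i) = regIdx K (u' i)
  floor_sub_eq : ∀ i j, u i ≤ K → u j ≤ K → ⌊(u i : ℝ) - u j⌋ = ⌊(u' i : ℝ) - u' j⌋

namespace RegionEquiv

variable {K : ℕ} {ι κ : Type*} {u u' : ι → ℝ≥0}

theorem comp (h : RegionEquiv K u u') (π : κ → ι) : RegionEquiv K (u ∘ π) (u' ∘ π) :=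
  ⟨fun k => h.regIdx_eq (π k), fun k l => h.floor_sub_eq (π k) (π l)⟩

theorem optionElim (h : RegionEquiv K u u') :
    RegionEquiv K (fun o : Option ι => o.elim 0 u) (fun o => o.elim 0 u') := by
  refine ⟨fun o => ?_, fun o o' ho ho' => ?_⟩
  · cases o
    · rfl
    · exact h.regIdx_eq _
  · cases o <;> cases o' <;> simp only [Option.elim_none, Option.elim_some, NNReal.coe_zero,
      sub_zero, zero_sub, Int.floor_neg] at ho ho' ⊢
    · rw [(intFloor_eq_and_intCeil_eq_of_regIdx_eq ho' (h.regIdx_eq _)).2]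
    · exact (intFloor_eq_and_intCeil_eq_of_regIdx_eq ho (h.regIdx_eq _)).1
    · exact h.floor_sub_eq _ _ ho ho'

theorem reset (h : RegionEquiv K u u') (π : κ → ι) (r : κ → Bool) :
    RegionEquiv K (fun k => if r k then 0 else u (π k))
      (fun k => if r k then 0 else u' (π k)) := by
  have hu : ∀ u : ι → ℝ≥0, (fun k => if r k then 0 else u (π k)) =
      (fun o : Option ι => o.elim 0 u) ∘ fun k => if r k then none else some (π k) :=
    fun u => funext fun k => by simp only [Function.comp_apply]; split_ifs <;> rfl
  rw [hu, hu]
  exact h.optionElim.comp _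

theorem sub_lt_iff (h : RegionEquiv K u u') {i j : ι} (hi : u i ≤ K) (hj : u j ≤ K) (z : ℤ) :
    (u i : ℝ) - u j < z ↔ (u' i : ℝ) - u' j < z := by
  rw [← Int.floor_lt, ← Int.floor_lt, h.floor_sub_eq i j hi hj]

theorem cmp_natCast_sub (h : RegionEquiv K u u') {i j : ι} (hi : u i ≤ K) (hj : u j ≤ K)
    (c d : ℕ) : cmp ((c : ℝ) - u i) (d - u j) = cmp ((c : ℝ) - u' i) (d - u' j) := by
  have key : ∀ (c d : ℕ) (x y : ℝ), (c : ℝ) - x < d - y ↔ y - x < ((d - c : ℤ) : ℝ) := by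
    intros; push_cast; constructor <;> intro <;> linarith
  exact cmp_eq_cmp_of_lt_iff_of_lt_iff (by rw [key, key, h.sub_lt_iff hj hi])
    (by rw [key, key, h.sub_lt_iff hi hj])

theorem exists_delay [Finite ι] (h : RegionEquiv K u u') (t : ℝ≥0) :
    ∃ t' : ℝ≥0, RegionEquiv K (fun i => u i + t') (fun i => u' i + t) := by
  classical
  cases nonempty_fintype ι
  have h₀ := h.optionElim
  set v : Option ι → ℝ≥0 := fun o => o.elim 0 u
  set v' : Option ι → ℝ≥0 := fun o => o.elim 0 u'
  -- `t'` has to sit among the thresholds `c - u i` (`c ≤ K`) exactly as `t` sits among the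
  -- `c - u' i`: this is the extension property of finite partial order isomorphisms of `ℝ`.
  -- The adjoined constant clock `0` contributes the threshold `0`, which forces `t' ≥ 0`.
  let S : Finset (ℝ × ℝ) := ((Finset.univ.filter fun o => v o ≤ K) ×ˢ Finset.range (K + 1)).image
    fun p => ((p.2 : ℝ) - v' p.1, (p.2 : ℝ) - v p.1)
  have hS : ∀ p ∈ S, ∀ q ∈ S, cmp p.1 q.1 = cmp p.2 q.2 := by
    simp only [S, Finset.mem_image, Finset.mem_product, Finset.mem_filter, Finset.mem_univ,
      true_and]
    rintro _ ⟨⟨o, c⟩, ⟨ho, -⟩, rfl⟩ _ ⟨⟨o', d⟩, ⟨ho', -⟩, rfl⟩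
    exact (h₀.cmp_natCast_sub ho ho' c d).symm
  obtain ⟨b, hb⟩ := Order.PartialIso.exists_across ⟨S, hS⟩ (t : ℝ)
  have hcut : ∀ o, v o ≤ K → ∀ c : ℕ, c ≤ K →
      cmp ((c : ℝ) - v' o) t = cmp ((c : ℝ) - v o) b := fun o ho c hc =>
    hb _ (Finset.mem_image_of_mem _ (a := (o, c)) (Finset.mem_product.2
      ⟨Finset.mem_filter.2 ⟨Finset.mem_univ o, ho⟩, Finset.mem_range.2 (Nat.lt_succ_of_le hc)⟩))
  have hb0 : 0 ≤ b := by
    have := hcut none (by simp [v]) 0 K.zero_le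
    simp only [v, v', Option.elim_none, CharP.cast_eq_zero, NNReal.coe_zero, sub_zero] at this
    exact (le_iff_le_of_cmp_eq_cmp this).1 t.2
  lift b to ℝ≥0 using hb0
  refine ⟨b, fun i => ?_, fun i j hi hj => ?_⟩
  · by_cases hi : u i ≤ K
    · refine regIdx_eq_of_forall_lt_iff fun c hc => ?_
      have hc := hcut (some i) hi c hc
      simp only [v, v', Option.elim_some] at hc
      simp only [← NNReal.coe_lt_coe, NNReal.coe_add, NNReal.coe_natCast]
      rw [← lt_sub_iff_add_lt', ← lt_sub_iff_add_lt', ← sub_lt_iff_lt_add', ← sub_lt_iff_lt_add']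
      exact ⟨(lt_iff_lt_of_cmp_eq_cmp (cmp_eq_cmp_symm.1 hc)).symm,
        (lt_iff_lt_of_cmp_eq_cmp hc).symm⟩
    · have hi' : ¬ u' i ≤ K := (le_iff_le_of_regIdx_eq (h.regIdx_eq i)).not.1 hi
      rw [regIdx_of_lt ((not_le.1 hi).trans_le le_self_add),
        regIdx_of_lt ((not_le.1 hi').trans_le le_self_add)]
  · simpa only [NNReal.coe_add, add_sub_add_right_eq_sub] using
      h.floor_sub_eq i j (le_self_add.trans hi) (le_self_add.trans hj)

end RegionEquiv

namespace ATA1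

variable {A Q : Type} (M : ATA1 A Q)

def AccFromSet (w : TimedWord A) (P : Set (Q × ℝ≥0)) : Prop :=
  ∀ c ∈ P, M.AccFrom w c.1 c.2

theorem accFromSet_cons_iff {a : A} {t : ℝ≥0} {w : TimedWord A} {P : Set (Q × ℝ≥0)} :
    M.AccFromSet ((a, t) :: w) P ↔ ∃ P', M.Tstep a t P P' ∧ M.AccFromSet w P' := by
  constructor
  · intro h
    have h' : ∀ c ∈ P, ∃ d : List (Q × Bool),
        (∃ gb ∈ M.trans c.1 a, gb.1.sat (fun _ => c.2 + t) ∧ d ∈ gb.2) ∧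
        ∀ qb ∈ d, M.AccFrom w qb.1 (if qb.2 then 0 else c.2 + t) := fun c hc => by
      obtain ⟨gb, hgb, hsat, d, hd, hacc⟩ := h c hc
      exact ⟨d, ⟨gb, hgb, hsat, hd⟩, hacc⟩
    choose! d hd hacc using h'
    refine ⟨_, ⟨d, hd, rfl⟩, fun c' hc' => ?_⟩
    obtain ⟨c, hc, qb, hqb, rfl⟩ := Set.mem_iUnion₂.1 hc'
    exact hacc c hc qb hqb
  · rintro ⟨_, ⟨d, hd, rfl⟩, hacc⟩ c hc
    obtain ⟨gb, hgb, hsat, hdc⟩ := hd c hc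
    exact ⟨gb, hgb, hsat, d c, hdc, fun qb hqb => hacc _ (Set.mem_biUnion hc ⟨qb, hqb, rfl⟩)⟩

variable {M}

theorem Tstep.finite {a : A} {t : ℝ≥0} {P P' : Set (Q × ℝ≥0)} (h : M.Tstep a t P P')
    (hP : P.Finite) : P'.Finite := by
  obtain ⟨d, -, rfl⟩ := h
  refine hP.biUnion fun c _ => ((d c).finite_toSet.image
    fun qb : Q × Bool => (qb.1, if qb.2 then 0 else c.2 + t)).subset ?_
  rintro _ ⟨qb, hqb, rfl⟩
  exact ⟨qb, hqb, rfl⟩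

end ATA1

def RegionSim {Q : Type} (K : ℕ) (P₂ P₁ : Set (Q × ℝ≥0)) : Prop :=
  ∃ μ : P₂ → ℝ≥0, (∀ c, (c.1.1, μ c) ∈ P₁) ∧ RegionEquiv K (fun c : P₂ => c.1.2) μ

theorem RegionSim.exists_tstep {A Q : Type} {M : ATA1 A Q} {K : ℕ}
    (hK : ∀ q a, ∀ gb ∈ M.trans q a, gb.1.maxConst ≤ K) {P₁ P₂ P₁' : Set (Q × ℝ≥0)} {a : A}
    {t : ℝ≥0} (hsim : RegionSim K P₂ P₁) (hP₂ : P₂.Finite) (h : M.Tstep a t P₁ P₁') :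
    ∃ t' P₂', M.Tstep a t' P₂ P₂' ∧ RegionSim K P₂' P₁' := by
  classical
  obtain ⟨μ, hμ, hequiv⟩ := hsim
  obtain ⟨d, hd, rfl⟩ := h
  have := hP₂.to_subtype
  obtain ⟨t', hequiv'⟩ := hequiv.exists_delay t
  let d₂ : Q × ℝ≥0 → List (Q × Bool) := fun c => if hc : c ∈ P₂ then d (c.1, μ ⟨c, hc⟩) else []
  refine ⟨t', _, ⟨d₂, fun c hc => ?_, rfl⟩, ?_⟩
  · obtain ⟨gb, hgb, hsat, hdc⟩ := hd _ (hμ ⟨c, hc⟩)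
    refine ⟨gb, hgb, ?_, by simpa only [d₂, dif_pos hc] using hdc⟩
    exact (ClockConstraint.sat_congr_of_regIdx_eq (fun _ => hequiv'.regIdx_eq ⟨c, hc⟩) _
      (hK _ _ _ hgb)).2 hsat
  · have hsrc : ∀ x : ↥(⋃ c ∈ P₂, {c' | ∃ qb ∈ d₂ c, c' = (qb.1, if qb.2 then 0 else c.2 + t')}),
        ∃ (c : P₂) (qb : Q × Bool), qb ∈ d (c.1.1, μ c) ∧
          x.1 = (qb.1, if qb.2 then 0 else c.1.2 + t') := by
      rintro ⟨x, hx⟩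
      obtain ⟨c, hc, qb, hqb, rfl⟩ := Set.mem_iUnion₂.1 hx
      exact ⟨⟨c, hc⟩, qb, by simpa only [d₂, dif_pos hc] using hqb, rfl⟩
    choose π qb hqb hx using hsrc
    refine ⟨fun x => if (qb x).2 then 0 else μ (π x) + t, fun x => ?_, ?_⟩
    · rw [hx x]
      exact Set.mem_biUnion (hμ (π x)) ⟨qb x, hqb x, rfl⟩
    · have hval : (fun x => x.1.2) = fun x => if (qb x).2 then 0 else (π x).1.2 + t' :=
        funext fun x => by rw [hx x]
      rw [hval]
      exact hequiv'.reset π fun x => (qb x).2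

theorem ATA1.exists_accFromSet_of_regionSim {A Q : Type} (M : ATA1 A Q) {K : ℕ}
    (hK : ∀ q a, ∀ gb ∈ M.trans q a, gb.1.maxConst ≤ K) (w : TimedWord A)
    {P₁ P₂ : Set (Q × ℝ≥0)} (hP₂ : P₂.Finite) (hsim : RegionSim K P₂ P₁)
    (hacc : M.AccFromSet w P₁) :
    ∃ w', M.AccFromSet w' P₂ := by
  induction w generalizing P₁ P₂ with
  | nil =>
    obtain ⟨μ, hμ, -⟩ := hsim
    exact ⟨[], fun c hc => hacc (c.1, μ ⟨c, hc⟩) (hμ ⟨c, hc⟩)⟩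
  | cons p w ih =>
    obtain ⟨P₁', hstep₁, hacc'⟩ := M.accFromSet_cons_iff.1 hacc
    obtain ⟨t', P₂', hstep₂, hsim'⟩ := hsim.exists_tstep hK hP₂ hstep₁
    obtain ⟨w', hw'⟩ := ih (hstep₂.finite hP₂) hsim' hacc'
    exact ⟨(p.1, t') :: w', M.accFromSet_cons_iff.2 ⟨P₂', hstep₂, hw'⟩⟩

section Abstraction

variable {Q : Type} {K : ℕ} {P P₁ P₂ : Set (Q × ℝ≥0)} {W : List (Set (Q × ℕ))}

theorem exists_isAbstraction (hP : P.Finite) : ∃ W, IsAbstraction K P W := by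
  classical
  let fs := ((hP.image fun c => Int.fract (c.2 : ℝ)).toFinset).sort (· ≤ ·)
  refine ⟨fs.map fun f => {qr | ∃ c ∈ P, Int.fract (c.2 : ℝ) = f ∧ qr = (c.1, regIdx K c.2)},
    fs, (Finset.sortedLT_sort _).pairwise, fun f => ?_, List.length_map _, fun i _ _ => ?_⟩
  · simp only [fs, Finset.mem_sort, Set.Finite.mem_toFinset, Set.mem_image]
  · simp only [List.get_eq_getElem, List.getElem_map]

theorem IsAbstraction.badW_iff {F : Set Q} (h : IsAbstraction K P W) :
    BadW F W ↔ ∀ c ∈ P, c.1 ∈ F := by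
  obtain ⟨fs, -, hm, hl, hg⟩ := h
  constructor
  · intro hbad c hc
    obtain ⟨i, hi, hfi⟩ := List.getElem_of_mem ((hm _).2 ⟨c, hc, rfl⟩)
    have hiW : i < W.length := hl ▸ hi
    refine hbad _ (W.get_mem ⟨i, hiW⟩) (c.1, regIdx K c.2) ?_
    rw [hg i hiW hi]
    exact ⟨c, hc, hfi.symm, rfl⟩
  · intro hP s hs qr hqr
    obtain ⟨i, hi⟩ := List.mem_iff_get.1 hs
    rw [← hi, hg i i.2 (hl ▸ i.2)] at hqr
    obtain ⟨c, hc, -, rfl⟩ := hqr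
    exact hP c hc

theorem IsAbstraction.regionSim (h₁ : IsAbstraction K P₁ W) (h₂ : IsAbstraction K P₂ W) :
    RegionSim K P₂ P₁ := by
  obtain ⟨fs₁, hs₁, -, hl₁, hg₁⟩ := h₁
  obtain ⟨fs₂, hs₂, hm₂, hl₂, hg₂⟩ := h₂
  have hpos : ∀ c : P₂, ∃ (i : ℕ) (hi₁ : i < fs₁.length) (hi₂ : i < fs₂.length) (v : ℝ≥0),
      (c.1.1, v) ∈ P₁ ∧ regIdx K c.1.2 = regIdx K v ∧
        Int.fract (c.1.2 : ℝ) = fs₂[i] ∧ Int.fract (v : ℝ) = fs₁[i] := by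
    rintro ⟨c, hc⟩
    obtain ⟨i, hi₂, hfi⟩ := List.getElem_of_mem ((hm₂ _).2 ⟨c, hc, rfl⟩)
    have hiW : i < W.length := hl₂ ▸ hi₂
    have hmem : (c.1, regIdx K c.2) ∈ W.get ⟨i, hiW⟩ := by
      rw [hg₂ i hiW hi₂]
      exact ⟨c, hc, hfi.symm, rfl⟩
    rw [hg₁ i hiW (hl₁ ▸ hiW)] at hmem
    obtain ⟨⟨q, v⟩, hc₁, hfv, heq⟩ := hmem
    obtain ⟨rfl, hreg⟩ := Prod.mk.inj heq
    exact ⟨i, hl₁ ▸ hiW, hi₂, v, hc₁, hreg, hfi.symm, hfv⟩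
  choose pos hpos₁ hpos₂ μ hμ hreg hfract₂ hfract₁ using hpos
  have hord : ∀ l : List ℝ, l.Pairwise (· < ·) → ∀ i j (hi : i < l.length) (hj : j < l.length),
      l[i] < l[j] ↔ i < j := fun l hl i j hi hj =>
    hl.sortedLT.strictMono_get.lt_iff_lt (a := ⟨i, hi⟩) (b := ⟨j, hj⟩)
  refine ⟨μ, hμ, ⟨hreg, fun c c' hc hc' => Int.floor_sub_congr
    (intFloor_eq_and_intCeil_eq_of_regIdx_eq hc (hreg c)).1
    (intFloor_eq_and_intCeil_eq_of_regIdx_eq hc' (hreg c')).1 ?_⟩⟩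
  rw [hfract₂, hfract₂, hfract₁, hfract₁, hord _ hs₂, hord _ hs₁]

end Abstraction

theorem ATA1.reaches_badW_of_accFromSet {A Q : Type} [Fintype A] [Fintype Q]
    (M : ATA1 A Q) (w : TimedWord A) {P : Set (Q × ℝ≥0)} (hP : P.Finite)
    (hacc : M.AccFromSet w P) {W : List (Set (Q × ℕ))} (hW : IsAbstraction M.cmax P W) :
    ∃ W', Relation.ReflTransGen (fun X Y => ∃ a, HStep M a X Y) W W' ∧ BadW M.accept W' := by
  induction w generalizing P W with
  | nil => exact ⟨W, .refl, hW.badW_iff.2 hacc⟩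
  | cons p w ih =>
    obtain ⟨P', hstep, hacc'⟩ := M.accFromSet_cons_iff.1 hacc
    have hP' := hstep.finite hP
    obtain ⟨W', hW'⟩ := exists_isAbstraction (K := M.cmax) hP'
    obtain ⟨W'', hreach, hbad⟩ := ih hP' hacc' hW'
    exact ⟨W'', .head ⟨p.1, P, P', hP, hW, hW', p.2, hstep⟩ hreach, hbad⟩

theorem ATA1.exists_accFromSet_of_reaches_badW {A Q : Type} [Fintype A] [Fintype Q]
    (M : ATA1 A Q) {W W' : List (Set (Q × ℕ))}
    (hreach : Relation.ReflTransGen (fun X Y => ∃ a, HStep M a X Y) W W')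
    (hbad : BadW M.accept W') {P : Set (Q × ℝ≥0)} (hP : P.Finite)
    (hW : IsAbstraction M.cmax P W) : ∃ w, M.AccFromSet w P := by
  induction hreach using Relation.ReflTransGen.head_induction_on generalizing P with
  | refl => exact ⟨[], hW.badW_iff.1 hbad⟩
  | head hstep _ ih =>
    obtain ⟨a, R, R', hRfin, hR, hR', t, hT⟩ := hstep
    obtain ⟨w, hw⟩ := ih (hT.finite hRfin) hR'
    exact M.exists_accFromSet_of_regionSim M.maxConst_le_cmax _ hP (hR.regionSim hW)
      (M.accFromSet_cons_iff.2 ⟨R', hT, hw⟩)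

/-- For a one-clock alternating timed automaton with
transition formulas in disjunctive normal form, the language is nonempty iff
a bad state is reachable in the region-abstracted transition system `H` from
the initial state `W₀ = H(P₀)`, `P₀ = {(q₀, 0)}`. -/
theorem lang_nonempty_iff_bad_reachable_regions
    {A Q : Type} [Fintype A] [Fintype Q] (M : ATA1 A Q) :
    M.lang.Nonempty ↔
      ∃ W₀ W : List (Set (Q × ℕ)),
        IsAbstraction M.cmax ({(M.init, 0)} : Set (Q × NNReal)) W₀ ∧
        Relation.ReflTransGen (fun X Y => ∃ a, HStep M a X Y) W₀ W ∧
        BadW M.accept W := by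
  have hP₀ : ({(M.init, 0)} : Set (Q × ℝ≥0)).Finite := Set.finite_singleton _
  have hlang : M.lang.Nonempty ↔ ∃ w, M.AccFromSet w {(M.init, 0)} := by
    simp only [Set.Nonempty, ATA1.lang, ATA1.AccFromSet, Set.mem_ofPred_eq,
      Set.mem_singleton_iff, forall_eq]
  rw [hlang]
  constructor
  · rintro ⟨w, hw⟩
    obtain ⟨W₀, hW₀⟩ := exists_isAbstraction (K := M.cmax) hP₀
    obtain ⟨W, hreach, hbad⟩ := M.reaches_badW_of_accFromSet w hP₀ hw hW₀
    exact ⟨W₀, W, hW₀, hreach, hbad⟩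
  · rintro ⟨W₀, W, hW₀, hreach, hbad⟩
    exact M.exists_accFromSet_of_reaches_badW hreach hbad hP₀ hW₀
end

section
/- For each state W of the region-abstracted transition system H, the set of successors { W' ∈ Λ* : W --a--> W' in H for some letter a } is finite and effectively computable from W and the automaton. -/
/-!
The fractional parts of the clock values after a step are `0` (reset clocks) or `fract (f + t)`
for a fractional part `f` before it, so `H(P')` has at most one letter more than `H(P)`. Every
letter is a subset of the finite set `Q × reg`, hence the successors of `W` lie among the finitely
many words of length at most `|W| + 1` over a finite alphabet.
-/

theorem Int.fract_fract_add {R : Type*} [Ring R] [LinearOrder R] [IsOrderedRing R]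
    [FloorRing R] (a b : R) :
    Int.fract (Int.fract a + b) = Int.fract (a + b) := by
  conv_rhs => rw [← Int.floor_add_fract a, add_assoc, Int.fract_intCast_add]

theorem List.finite_length_le_of_forall_mem {α : Type*} {s : Set α} (hs : s.Finite) (n : ℕ) :
    {l : List α | l.length ≤ n ∧ ∀ x ∈ l, x ∈ s}.Finite := by
  have := hs.to_subtype
  refine ((List.finite_length_le s n).image (List.map Subtype.val)).subset ?_
  rintro l ⟨hl, hmem⟩
  lift l to List s using hmem
  exact ⟨l, by simpa using hl, rfl⟩

theorem regIdx_le (K : ℕ) (v : NNReal) : regIdx K v ≤ 2 * K + 1 := by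
  unfold regIdx
  split_ifs with hK
  · exact le_rfl
  all_goals
    have : ⌊v⌋₊ ≤ K := (Nat.floor_le_floor (not_lt.mp hK)).trans_eq (Nat.floor_natCast K)
    omega

def fractParts {Q : Type} (P : Set (Q × NNReal)) : Set ℝ :=
  (fun c => Int.fract (c.2 : ℝ)) '' P

section Abstraction

variable {Q : Type} {K : ℕ} {P : Set (Q × NNReal)} {W : List (Set (Q × ℕ))}

theorem IsAbstraction.length_eq_encard (h : IsAbstraction K P W) :
    (W.length : ℕ∞) = (fractParts P).encard := by
  obtain ⟨fs, hsorted, hmem, hlen, -⟩ := h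
  have hfs : fractParts P = (fs.toFinset : Set ℝ) := by
    ext f
    simp [fractParts, hmem]
  rw [hfs, Set.encard_coe_eq_coe_finsetCard, List.toFinset_card_of_nodup hsorted.nodup, hlen]

theorem IsAbstraction.subset_of_mem (h : IsAbstraction K P W) :
    ∀ s ∈ W, s ⊆ (Set.univ : Set Q) ×ˢ Set.Iic (2 * K + 1) := by
  obtain ⟨fs, -, -, hlen, hget⟩ := h
  intro s hs
  obtain ⟨⟨i, hi⟩, rfl⟩ := List.mem_iff_get.mp hs
  rw [hget i hi (hlen ▸ hi)]
  rintro _ ⟨c, -, -, rfl⟩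
  exact ⟨Set.mem_univ _, regIdx_le K c.2⟩

end Abstraction

theorem ATA1.Tstep.fractParts_subset {A Q : Type} {M : ATA1 A Q} {a : A} {t : NNReal}
    {P P' : Set (Q × NNReal)} (h : M.Tstep a t P P') :
    fractParts P' ⊆ insert 0 ((fun f => Int.fract (f + (t : ℝ))) '' fractParts P) := by
  obtain ⟨choice, -, rfl⟩ := h
  rintro _ ⟨c', hc', rfl⟩
  simp only [Set.mem_iUnion] at hc'
  obtain ⟨c, hc, ⟨q, reset⟩, -, rfl⟩ := hc'
  cases reset
  · exact Or.inr ⟨_, ⟨c, hc, rfl⟩, by simp [Int.fract_fract_add]⟩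
  · exact Or.inl (by simp)

section HStep

variable {A Q : Type} [Fintype A] [Fintype Q] {M : ATA1 A Q} {a : A}
  {W W' : List (Set (Q × ℕ))}

theorem HStep.length_le (h : HStep M a W W') : W'.length ≤ W.length + 1 := by
  obtain ⟨P, P', -, hW, hW', t, hstep⟩ := h
  have : (W'.length : ℕ∞) ≤ W.length + 1 :=
    calc (W'.length : ℕ∞) = (fractParts P').encard := hW'.length_eq_encard
      _ ≤ (insert 0 ((fun f => Int.fract (f + (t : ℝ))) '' fractParts P)).encard :=
        Set.encard_le_encard hstep.fractParts_subset
      _ ≤ ((fun f => Int.fract (f + (t : ℝ))) '' fractParts P).encard + 1 :=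
        Set.encard_insert_le _ _
      _ ≤ (fractParts P).encard + 1 := add_le_add_left (Set.encard_image_le _ _) 1
      _ = W.length + 1 := by rw [hW.length_eq_encard]
  exact_mod_cast this

theorem HStep.subset_of_mem (h : HStep M a W W') :
    ∀ s ∈ W', s ⊆ (Set.univ : Set Q) ×ˢ Set.Iic (2 * M.cmax + 1) := by
  obtain ⟨_, _, -, -, hW', -⟩ := h
  exact hW'.subset_of_mem

end HStep

/-- For each state `W` of the region-abstracted transition
system `H`, the set of its successors is finite, and indeed can be presented
by an explicit finite list. -/
theorem region_system_finitely_branching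
    {A Q : Type} [Fintype A] [Fintype Q] (M : ATA1 A Q)
    (W : List (Set (Q × ℕ))) :
    { W' : List (Set (Q × ℕ)) | ∃ a : A, HStep M a W W' }.Finite ∧
    ∃ l : List (List (Set (Q × ℕ))),
      ∀ W' : List (Set (Q × ℕ)), (∃ a : A, HStep M a W W') ↔ W' ∈ l := by
  have hletters : {s : Set (Q × ℕ) | s ⊆ Set.univ ×ˢ Set.Iic (2 * M.cmax + 1)}.Finite :=
    (Set.finite_univ.prod (Set.finite_Iic _)).finite_subsets
  have hfin : { W' : List (Set (Q × ℕ)) | ∃ a : A, HStep M a W W' }.Finite := by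
    refine (List.finite_length_le_of_forall_mem hletters (W.length + 1)).subset ?_
    rintro W' ⟨a, h⟩
    exact ⟨h.length_le, h.subset_of_mem⟩
  refine ⟨hfin, hfin.toFinset.toList, fun W' => ?_⟩
  rw [Finset.mem_toList, Set.Finite.mem_toFinset]
  rfl
end

section
/- It is decidable whether a bad state is reachable in the region-abstracted transition system H from the initial state W₀; more generally, reachability of a bad state is decidable for any finitely-branching transition system over words over a finite powerset alphabet whose successor sets are computable, in which the inverse of the monotone domination order ⪯ is a simulation and badness is downward closed under ⪯. -/
/-!
Reaching a bad state is semi-decidable: breadth-first search through the finitely branching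
system finds a bad state after finitely many levels whenever one is reachable.

Not reaching one is semi-decidable too. The valid states from which no bad state is reachable
form a `⪯`-upward closed set (the inverse of `⪯` is a simulation and badness is downward
closed), so by Higman's lemma they have a finite basis. A finite list of valid, good words that
covers `W₀` and whose successors are each covered again is a certificate of safety that can be
checked, since `⪯` is decidable (greedily). Such a certificate exists exactly when no bad state
is reachable. Post's theorem combines the two semi-decision procedures.
-/

/-- Monotone domination on words over a powerset alphabet, where each letter
(a finite subset of the base set) is represented by the list of its
elements: `W₁ ⪯ W₂` iff there is a strictly increasing map of positions
along which each letter of `W₁` is (as a set) contained in the corresponding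
letter of `W₂`. -/
def MonDomL (W₁ W₂ : List (List ℕ)) : Prop :=
  ∃ f : Fin W₁.length → Fin W₂.length,
    StrictMono f ∧ ∀ i : Fin W₁.length, W₁.get i ⊆ W₂.get (f i)

/-- A word over the powerset alphabet `𝒫({0, …, k-1})`. -/
def ValidWord (k : ℕ) (W : List (List ℕ)) : Prop :=
  ∀ s ∈ W, ∀ x ∈ s, x < k

namespace Computable

variable {α β σ : Type*} [Primcodable α] [Primcodable β] [Primcodable σ]

theorem nat_iterate {f : α → ℕ} {g : α → β} {h : α → β → β} (hf : Computable f)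
    (hg : Computable g) (hh : Computable₂ h) : Computable fun a => (h a)^[f a] (g a) :=
  (nat_rec hf hg (hh.comp fst (snd.comp snd)).to₂).of_eq fun a => by
    induction f a <;> simp [*, -Function.iterate_succ, Function.iterate_succ']

theorem list_map {f : α → List β} {g : α → β → σ} (hf : Computable f) (hg : Computable₂ g) :
    Computable fun a => (f a).map (g a) := by
  have hstep : Computable₂ fun (a : α) (p : ℕ × List σ) =>
      p.2 ++ ((f a)[p.1]?.map (g a)).toList :=
    (list_append.comp (snd.comp snd) (Primrec.optionToList.to_comp.comp
      (option_map (list_getElem?.comp (hf.comp fst) (fst.comp snd))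
        (hg.comp (fst.comp fst) snd).to₂))).to₂
  refine (nat_rec (list_length.comp hf) (const []) hstep).of_eq fun a => ?_
  suffices ∀ n, Nat.rec (motive := fun _ => List σ) []
      (fun n l => l ++ ((f a)[n]?.map (g a)).toList) n = ((f a).take n).map (g a) by
    simp [this]
  intro n
  induction n with
  | zero => rfl
  | succ n ih =>
    simp only [List.take_add_one, List.map_append, ← ih]
    cases (f a)[n]? <;> rfl

theorem list_flatMap {f : α → List β} {g : α → β → List σ} (hf : Computable f)
    (hg : Computable₂ g) : Computable fun a => (f a).flatMap (g a) :=
  (Primrec.list_flatten.to_comp.comp (list_map hf hg)).of_eq fun a => by simp [List.flatMap]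

end Computable

namespace ComputablePred

variable {α β : Type*} [Primcodable α] [Primcodable β]

theorem comp {p : β → Prop} {f : α → β} (hp : ComputablePred p) (hf : Computable f) :
    ComputablePred fun a => p (f a) :=
  let ⟨_, hp⟩ := hp
  ⟨inferInstance, hp.comp hf⟩

protected theorem and {p q : α → Prop} (hp : ComputablePred p) (hq : ComputablePred q) :
    ComputablePred fun a => p a ∧ q a := by
  obtain ⟨_, hp⟩ := hp
  obtain ⟨_, hq⟩ := hq
  exact ⟨inferInstance, (Primrec.and.to_comp.comp hp hq).of_eq fun a => by simp⟩

theorem forall_mem_list {f : α → List β} {p : α → β → Prop} (hf : Computable f)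
    (hp : ComputablePred fun x : α × β => p x.1 x.2) :
    ComputablePred fun a => ∀ b ∈ f a, p a b := by
  obtain ⟨_, hp⟩ := hp
  have hall : PrimrecPred fun l : List Bool => ∀ x ∈ l, x = true :=
    PrimrecPred.forall_mem_list (Primrec.primrecPred (p := fun x : Bool => x = true)
      (Primrec.id.of_eq fun _ => by simp))
  exact (hall.computablePred.comp (hf.list_map hp.to₂)).of_eq fun a => by simp

theorem exists_mem_list {f : α → List β} {p : α → β → Prop} (hf : Computable f)
    (hp : ComputablePred fun x : α × β => p x.1 x.2) :
    ComputablePred fun a => ∃ b ∈ f a, p a b :=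
  (forall_mem_list (p := fun a b => ¬p a b) hf hp.not).not.of_eq fun a => by simp

end ComputablePred

section

open Computable

theorem REPred.exists {α β : Type*} [Primcodable α] [Primcodable β] {p : α → β → Prop}
    (hp : ComputablePred fun x : α × β => p x.1 x.2) : REPred fun a => ∃ b, p a b := by
  obtain ⟨g, hg, hpg⟩ := ComputablePred.computable_iff.mp hp
  have hpg' : ∀ a b, p a b ↔ g (a, b) = true := fun a b => iff_of_eq (congrFun hpg (a, b))
  have hsearch : Computable₂ fun (a : α) (n : ℕ) =>
      (Encodable.decode (α := β) n).bind fun b => bif g (a, b) then some b else none :=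
    (option_bind (Computable.decode.comp snd)
      (cond (hg.comp ((fst.comp fst).pair snd)) (option_some.comp snd) (const none)).to₂).to₂
  refine (Partrec.rfindOpt hsearch).dom_re.of_eq fun a => ?_
  simp only [Nat.rfindOpt_dom, hpg']
  constructor
  · rintro ⟨n, b, hb⟩
    obtain ⟨b', -, hb'⟩ := Option.bind_eq_some_iff.mp hb
    exact ⟨b', by revert hb'; cases g (a, b') <;> simp⟩
  · rintro ⟨b, hb⟩
    exact ⟨Encodable.encode b, b, by simp [hb]⟩

end

namespace List

variable {α β : Type*} {R : α → β → Prop}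

theorem SublistForall₂.of_cons_left {a : α} {l₁ : List α} {l₂ : List β}
    (h : SublistForall₂ R (a :: l₁) l₂) : SublistForall₂ R l₁ l₂ := by
  obtain ⟨l, hl, hsub⟩ := sublistForall₂_iff.mp h
  cases hl with
  | cons _ hl => exact sublistForall₂_iff.mpr ⟨_, hl, (sublist_cons_self _ _).trans hsub⟩

theorem sublistForall₂_nil_right_iff {l : List α} :
    SublistForall₂ R l ([] : List β) ↔ l = [] :=
  ⟨fun h => by cases h; rfl, fun h => h ▸ .nil⟩

theorem sublistForall₂_cons_cons_iff_of_rel {a : α} {b : β} {l₁ : List α} {l₂ : List β}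
    (hab : R a b) : SublistForall₂ R (a :: l₁) (b :: l₂) ↔ SublistForall₂ R l₁ l₂ := by
  refine ⟨fun h => ?_, .cons hab⟩
  cases h with
  | cons _ h => exact h
  | cons_right h => exact h.of_cons_left

theorem sublistForall₂_cons_cons_iff_of_not_rel {a : α} {b : β} {l₁ : List α} {l₂ : List β}
    (hab : ¬R a b) :
    SublistForall₂ R (a :: l₁) (b :: l₂) ↔ SublistForall₂ R (a :: l₁) l₂ := by
  refine ⟨fun h => ?_, .cons_right⟩
  cases h with
  | cons h => exact absurd h hab
  | cons_right h => exact h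

variable (R) [DecidableRel R]

/-- One step of a greedy matching of the pending letters of the left list against the right
list; greedy is complete by `sublistForall₂_cons_cons_iff_of_rel`. -/
def sublistForall₂Step : List α → β → List α
  | [], _ => []
  | a :: l, b => if R a b then l else a :: l

theorem foldl_sublistForall₂Step_nil (l : List β) :
    l.foldl (sublistForall₂Step R) [] = [] := by
  induction l with
  | nil => rfl
  | cons b l ih => exact ih

theorem foldl_sublistForall₂Step_eq_nil_iff :
    ∀ (l₁ : List α) (l₂ : List β),
      l₂.foldl (sublistForall₂Step R) l₁ = [] ↔ SublistForall₂ R l₁ l₂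
  | l₁, [] => sublistForall₂_nil_right_iff.symm
  | [], b :: l₂ => by simp [foldl_sublistForall₂Step_nil, sublistForall₂Step, SublistForall₂.nil]
  | a :: l₁, b :: l₂ => by
    by_cases hab : R a b
    · simp [sublistForall₂Step, hab, sublistForall₂_cons_cons_iff_of_rel,
        foldl_sublistForall₂Step_eq_nil_iff l₁ l₂]
    · simp [sublistForall₂Step, hab, sublistForall₂_cons_cons_iff_of_not_rel,
        foldl_sublistForall₂Step_eq_nil_iff (a :: l₁) l₂]

end List

namespace PrimrecRel

open Primrec

variable {α β : Type*} [Primcodable α] [Primcodable β]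

theorem list_mem [DecidableEq α] : PrimrecRel fun (a : α) (l : List α) => a ∈ l :=
  ((Primrec.eq.exists_mem_list).comp snd fst).of_eq fun _ => by simp

theorem list_subset [DecidableEq α] : PrimrecRel fun (l₁ l₂ : List α) => l₁ ⊆ l₂ :=
  list_mem.forall_mem_list.of_eq fun _ _ => Iff.rfl

theorem sublistForall₂ {R : α → β → Prop} (hR : PrimrecRel R) :
    PrimrecRel (List.SublistForall₂ R) := by
  classical
  have hstep : Primrec₂ (List.sublistForall₂Step R) :=
    (list_casesOn fst (const []) (Primrec.ite (hR.comp (fst.comp snd) (snd.comp fst))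
      (snd.comp snd) (list_cons.comp (fst.comp snd) (snd.comp snd))).to₂).of_eq
        fun p => by rcases p with ⟨_ | ⟨a, l⟩, b⟩ <;> rfl
  exact (Primrec.eq.comp (list_foldl snd fst (hstep.comp (fst.comp snd) (snd.comp snd)).to₂)
    (const [])).of_eq fun _ => List.foldl_sublistForall₂Step_eq_nil_iff R _ _

end PrimrecRel

theorem Set.PartiallyWellOrderedOn.exists_finset_basis {α : Type*} {r : α → α → Prop}
    {s : Set α} (hs : s.PartiallyWellOrderedOn r) :
    ∃ B : Finset α, ↑B ⊆ s ∧ ∀ a ∈ s, ∃ b ∈ B, r b a := by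
  by_contra! h
  obtain ⟨f, hfs, hf⟩ := exists_seq_of_forall_finset_exists (· ∈ s) (fun a b => ¬r a b) h
  obtain ⟨m, n, hmn, hr⟩ := hs.exists_lt hfs
  exact hf m n hmn hr

section Reachability

variable {α : Type*}

def ReachesBad (succ : α → List α) (bad : α → Bool) (a : α) : Prop :=
  ∃ b, Relation.ReflTransGen (fun x y => y ∈ succ x) a b ∧ bad b = true

theorem reflTransGen_iff_exists_mem_iterate_flatMap {succ : α → List α} {a b : α} :
    Relation.ReflTransGen (fun x y => y ∈ succ x) a b ↔
      ∃ n, b ∈ (fun l => l.flatMap succ)^[n] [a] := by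
  constructor
  · intro h
    induction h with
    | refl => exact ⟨0, List.mem_singleton_self a⟩
    | tail _ hcd ih =>
      obtain ⟨n, hn⟩ := ih
      exact ⟨n + 1, by rw [Function.iterate_succ_apply']; exact List.mem_flatMap.mpr ⟨_, hn, hcd⟩⟩
  · rintro ⟨n, hn⟩
    induction n generalizing b with
    | zero => exact (List.mem_singleton.mp hn) ▸ .refl
    | succ n ih =>
      rw [Function.iterate_succ_apply'] at hn
      obtain ⟨c, hc, hbc⟩ := List.mem_flatMap.mp hn
      exact (ih hc).tail hbc

theorem reachesBad_iff_exists_iterate {succ : α → List α} {bad : α → Bool} {a : α} :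
    ReachesBad succ bad a ↔ ∃ n, ∃ b ∈ (fun l => l.flatMap succ)^[n] [a], bad b = true := by
  simp only [ReachesBad, reflTransGen_iff_exists_mem_iterate_flatMap]
  grind

variable (V : α → Prop) (r : α → α → Prop) (succ : α → List α) (bad : α → Bool)

/-- `B` is a finite basis of an `r`-upward closed inductive invariant of valid, good states
containing `a`. -/
def IsSafetyCertificate (a : α) (B : List α) : Prop :=
  (∃ b ∈ B, r b a) ∧ ∀ b ∈ B, V b ∧ bad b = false ∧ ∀ c ∈ succ b, ∃ b' ∈ B, r b' c

variable {V r succ bad}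

theorem IsSafetyCertificate.not_reachesBad (htrans : ∀ a b c, r a b → r b c → r a c)
    (hvalid : ∀ a b, V a → b ∈ succ a → V b)
    (hsim : ∀ a₁ a₂ a₂', V a₁ → V a₂ → r a₁ a₂ → a₂' ∈ succ a₂ → ∃ a₁' ∈ succ a₁, r a₁' a₂')
    (hdown : ∀ a b, r a b → bad b = true → bad a = true)
    {a : α} {B : List α} (ha : V a) (hB : IsSafetyCertificate V r succ bad a B) :
    ¬ReachesBad succ bad a := by
  obtain ⟨hcover, hB⟩ := hB
  have hinv : ∀ c, Relation.ReflTransGen (fun x y => y ∈ succ x) a c →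
      V c ∧ ∃ b ∈ B, r b c := by
    intro c hc
    induction hc with
    | refl => exact ⟨ha, hcover⟩
    | tail _ hcd ih =>
      obtain ⟨hc, b, hbB, hbc⟩ := ih
      obtain ⟨hb, -, hbsucc⟩ := hB b hbB
      obtain ⟨b₁, hb₁, hb₁d⟩ := hsim b _ _ hb hc hbc hcd
      obtain ⟨b', hb'B, hb'b₁⟩ := hbsucc b₁ hb₁
      exact ⟨hvalid _ _ hc hcd, b', hb'B, htrans _ _ _ hb'b₁ hb₁d⟩
  rintro ⟨c, hc, hbad⟩
  obtain ⟨-, b, hbB, hbc⟩ := hinv c hc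
  obtain ⟨-, hgood, -⟩ := hB b hbB
  simp [hdown b c hbc hbad] at hgood

theorem exists_isSafetyCertificate (hpwo : {a | V a}.PartiallyWellOrderedOn r)
    (hvalid : ∀ a b, V a → b ∈ succ a → V b) {a : α} (ha : V a)
    (hsafe : ¬ReachesBad succ bad a) : ∃ B, IsSafetyCertificate V r succ bad a B := by
  let S := {c | V c ∧ ¬ReachesBad succ bad c}
  obtain ⟨B, hBS, hbasis⟩ :=
    (hpwo.mono fun _ hc => hc.1 : S.PartiallyWellOrderedOn r).exists_finset_basis
  have hsucc_mem : ∀ b ∈ S, ∀ c ∈ succ b, c ∈ S := fun b ⟨hb, hbsafe⟩ c hc =>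
    ⟨hvalid b c hb hc, fun ⟨d, hcd, hd⟩ => hbsafe ⟨d, .head hc hcd, hd⟩⟩
  refine ⟨B.toList, ?_, fun b hb => ?_⟩
  · simpa using hbasis a ⟨ha, hsafe⟩
  · have hbS : b ∈ S := hBS (Finset.mem_toList.mp hb)
    refine ⟨hbS.1, ?_, fun c hc => by simpa using hbasis c (hsucc_mem b hbS c hc)⟩
    simpa using fun hbad => hbS.2 ⟨b, .refl, hbad⟩

variable [Primcodable α]

open Computable

theorem computablePred_isSafetyCertificate (hsucc : Computable succ) (hbad : Computable bad)
    (hV : ComputablePred V) (hr : ComputablePred fun x : α × α => r x.1 x.2) :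
    ComputablePred fun x : α × List α => IsSafetyCertificate V r succ bad x.1 x.2 := by
  have hgood : ComputablePred fun b => bad b = false :=
    Computable.computablePred ((Primrec.not.to_comp.comp hbad).of_eq fun b => by simp)
  have hcovered : ComputablePred fun x : α × List α => ∃ b ∈ x.2, r b x.1 :=
    .exists_mem_list snd (hr.comp (snd.pair (fst.comp fst)))
  have hclosed : ComputablePred fun y : (α × List α) × α =>
      ∀ c ∈ succ y.2, ∃ b' ∈ y.1.2, r b' c :=
    .forall_mem_list (hsucc.comp snd) <|
      .exists_mem_list (p := fun (z : ((α × List α) × α) × α) b' => r b' z.2)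
        (snd.comp (fst.comp fst)) (hr.comp (snd.pair (snd.comp fst)))
  exact hcovered.and <| .forall_mem_list snd <| (hV.comp snd).and <| (hgood.comp snd).and hclosed

theorem computablePred_and_reachesBad (hsucc : Computable succ) (hbad : Computable bad)
    (hV : ComputablePred V) (hr : ComputablePred fun x : α × α => r x.1 x.2)
    (htrans : ∀ a b c, r a b → r b c → r a c) (hpwo : {a | V a}.PartiallyWellOrderedOn r)
    (hvalid : ∀ a b, V a → b ∈ succ a → V b)
    (hsim : ∀ a₁ a₂ a₂', V a₁ → V a₂ → r a₁ a₂ → a₂' ∈ succ a₂ → ∃ a₁' ∈ succ a₁, r a₁' a₂')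
    (hdown : ∀ a b, r a b → bad b = true → bad a = true) :
    ComputablePred fun a => V a ∧ ReachesBad succ bad a := by
  have hreach : ComputablePred fun x : α × ℕ =>
      ∃ b ∈ (fun l => l.flatMap succ)^[x.2] [x.1], bad b = true :=
    .exists_mem_list
      (nat_iterate snd (list_cons.comp fst (const [])) (list_flatMap snd (hsucc.comp snd).to₂).to₂)
      (Computable.computablePred (hbad.comp snd |>.of_eq fun _ => by simp))
  have hcert : ComputablePred fun x : α × List α =>
      V x.1 → IsSafetyCertificate V r succ bad x.1 x.2 :=
    ((hV.comp fst).and (computablePred_isSafetyCertificate hsucc hbad hV hr).not).not.of_eq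
      fun _ => by simp only [not_and, not_not]
  refine ComputablePred.computable_iff_re_compl_re'.mpr ⟨?_, ?_⟩
  · refine (REPred.exists
      (p := fun a n => V a ∧ ∃ b ∈ (fun l => l.flatMap succ)^[n] [a], bad b = true)
      ((hV.comp fst).and hreach)).of_eq fun a => ?_
    simp only [reachesBad_iff_exists_iterate, exists_and_left]
  · refine (REPred.exists (p := fun a B => V a → IsSafetyCertificate V r succ bad a B)
      hcert).of_eq fun a => ⟨fun ⟨B, hB⟩ ⟨ha, hreach⟩ => ?_, fun h => ?_⟩
    · exact (hB ha).not_reachesBad htrans hvalid hsim hdown ha hreach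
    · by_cases ha : V a
      · obtain ⟨B, hB⟩ := exists_isSafetyCertificate hpwo hvalid ha fun hreach => h ⟨ha, hreach⟩
        exact ⟨B, fun _ => hB⟩
      · exact ⟨[], fun ha' => absurd ha' ha⟩

end Reachability

theorem monDomL_iff_sublistForall₂ {W₁ W₂ : List (List ℕ)} :
    MonDomL W₁ W₂ ↔ List.SublistForall₂ (· ⊆ ·) W₁ W₂ := by
  rw [List.sublistForall₂_iff]
  constructor
  · rintro ⟨f, hf, hsub⟩
    refine ⟨List.ofFn fun i => W₂.get (f i), ?_, ?_⟩
    · exact List.forall₂_iff_get.mpr ⟨by simp, fun i h₁ _ => by simpa using hsub ⟨i, h₁⟩⟩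
    · exact List.sublist_iff_exists_fin_orderEmbedding_get_eq.mpr
        ⟨(Fin.castOrderIso (List.length_ofFn)).toOrderEmbedding.trans
          (OrderEmbedding.ofStrictMono f hf), fun i => by simp; rfl⟩
  · rintro ⟨l, hl, hsub⟩
    obtain ⟨e, he⟩ := List.sublist_iff_exists_fin_orderEmbedding_get_eq.mp hsub
    refine ⟨fun i => e (Fin.cast hl.length_eq i), e.strictMono.comp (Fin.cast_strictMono _),
      fun i => ?_⟩
    rw [← he]
    exact List.forall₂_iff_get.mp hl |>.2 i i.2 _

theorem MonDomL.trans {W₁ W₂ W₃ : List (List ℕ)} (h₁₂ : MonDomL W₁ W₂) (h₂₃ : MonDomL W₂ W₃) :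
    MonDomL W₁ W₃ :=
  let ⟨f, hf, hfsub⟩ := h₁₂
  let ⟨g, hg, hgsub⟩ := h₂₃
  ⟨g ∘ f, hg.comp hf, fun i => List.Subset.trans (hfsub i) (hgsub (f i))⟩

theorem partiallyWellOrderedOn_subset_of_forall_lt (k : ℕ) :
    {l : List ℕ | ∀ x ∈ l, x < k}.PartiallyWellOrderedOn (· ⊆ ·) := by
  refine Set.partiallyWellOrderedOn_iff_exists_lt.mpr fun f hf => ?_
  have hfin : ∀ n, (f n).toFinset ∈ ((Finset.range k).powerset : Set (Finset ℕ)) := fun n =>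
    Finset.mem_coe.mpr <| Finset.mem_powerset.mpr fun x hx =>
      Finset.mem_range.mpr (hf n x (List.mem_toFinset.mp hx))
  obtain ⟨m, n, hmn, hmn'⟩ :=
    Set.Finite.exists_lt_map_eq_of_forall_mem hfin (Finset.finite_toSet _)
  exact ⟨m, n, hmn, fun x hx => List.mem_toFinset.mp (hmn' ▸ List.mem_toFinset.mpr hx)⟩

theorem partiallyWellOrderedOn_validWord (k : ℕ) :
    {W | ValidWord k W}.PartiallyWellOrderedOn MonDomL := by
  have : IsPreorder (List ℕ) (· ⊆ ·) :=
    { refl := List.Subset.refl, trans := fun _ _ _ => List.Subset.trans }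
  have higman :=
    (partiallyWellOrderedOn_subset_of_forall_lt k).partiallyWellOrderedOn_sublistForall₂
  refine Set.partiallyWellOrderedOn_iff_exists_lt.mpr fun f hf => ?_
  obtain ⟨m, n, hmn, hsub⟩ := higman.exists_lt hf
  exact ⟨m, n, hmn, monDomL_iff_sublistForall₂.mpr hsub⟩

theorem computablePred_validWord (k : ℕ) : ComputablePred (ValidWord k) :=
  (Primrec.nat_lt.comp Primrec.id (Primrec.const k)).forall_mem_list.forall_mem_list.computablePred

theorem computablePred_monDomL :
    ComputablePred fun x : List (List ℕ) × List (List ℕ) => MonDomL x.1 x.2 :=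
  (PrimrecRel.list_subset.sublistForall₂.of_eq fun _ _ =>
    monDomL_iff_sublistForall₂.symm).computablePred

/-- Reachability of a bad state is decidable for any
finitely-branching transition system over words over a finite powerset
alphabet with computable successor lists, in which the inverse of monotone
domination is a simulation and badness is downward closed under monotone
domination.  (The region-abstracted system `H` of a one-clock alternating
timed automaton is such a system, so reachability of a bad state in `H` from
`W₀` is decidable.) -/
theorem bad_state_reachability_decidable
    (k : ℕ) (succ : List (List ℕ) → List (List (List ℕ)))
    (bad : List (List ℕ) → Bool)
    (hsucc : Computable succ) (hbad : Computable bad)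
    (hvalid : ∀ W W', ValidWord k W → W' ∈ succ W → ValidWord k W')
    (hsim : ∀ W₁ W₂ W₂', ValidWord k W₁ → ValidWord k W₂ → MonDomL W₁ W₂ →
        W₂' ∈ succ W₂ → ∃ W₁' ∈ succ W₁, MonDomL W₁' W₂')
    (hdown : ∀ W W', MonDomL W W' → bad W' = true → bad W = true) :
    ∃ f : List (List ℕ) → Bool, Computable f ∧
      ∀ W₀ : List (List ℕ), ValidWord k W₀ →
        (f W₀ = true ↔
          ∃ W, Relation.ReflTransGen (fun X Y => Y ∈ succ X) W₀ W ∧ bad W = true) := by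
  obtain ⟨f, hf, hfP⟩ := ComputablePred.computable_iff.mp <|
    computablePred_and_reachesBad hsucc hbad (computablePred_validWord k) computablePred_monDomL
      (fun _ _ _ => MonDomL.trans) (partiallyWellOrderedOn_validWord k) hvalid hsim hdown
  exact ⟨f, hf, fun W₀ hW₀ => (iff_of_eq (congrFun hfP W₀)).symm.trans (and_iff_right hW₀)⟩
end

section
/- A channel system S has a lossy computation ending in the configuration (q_f, w_f) if and only if there exists a lossy computation encoding ending in (q_f, w_f), i.e., a timed word over the alphabet Σ̄ = Q ∪ Σ ∪ Δ satisfying conditions (P1)–(P3c). -/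
/-- A channel operation: write a letter (to the front of the channel), read
a letter (from the end of the channel), or a silent move. -/
inductive ChanOp (A : Type) : Type where
  | write : A → ChanOp A
  | read : A → ChanOp A
  | eps : ChanOp A

/-- A (one-channel) channel system: control states `Q`, initial state,
channel alphabet `A`, and a finite list of rules `(q, op, q')`; no rule
returns to the initial state. -/
structure ChannelSystem (Q A : Type) where
  init : Q
  rules : List (Q × ChanOp A × Q)
  no_return : ∀ r ∈ rules, r.2.2 ≠ init

/-- A perfect transition between configurations `(state, channel content)`
via rule `γ`. -/
def PerfectStep {Q A : Type} (S : ChannelSystem Q A) (γ : Q × ChanOp A × Q)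
    (c c' : Q × List A) : Prop :=
  γ ∈ S.rules ∧ γ.1 = c.1 ∧ γ.2.2 = c'.1 ∧
    match γ.2.1 with
    | ChanOp.eps => c'.2 = c.2
    | ChanOp.write a => c'.2 = a :: c.2
    | ChanOp.read a => c.2 = c'.2 ++ [a]

/-- A lossy transition: an arbitrary subword of the channel may be lost
before and after a perfect step (`List.Sublist` is the scattered subword
ordering). -/
def LossyStep {Q A : Type} (S : ChannelSystem Q A) (γ : Q × ChanOp A × Q)
    (c c' : Q × List A) : Prop :=
  ∃ u u' : List A, u.Sublist c.2 ∧ PerfectStep S γ (c.1, u) (c'.1, u') ∧ c'.2.Sublist u'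

/-- `S` has a lossy computation from the initial configuration `(q₀, ε)`
ending in `c`. -/
def LossyReach {Q A : Type} (S : ChannelSystem Q A) (c : Q × List A) : Prop :=
  Relation.ReflTransGen (fun c₁ c₂ => ∃ γ, LossyStep S γ c₁ c₂) (S.init, []) c

/-- The alphabet `Σ̄ = Q ∪ Σ ∪ Δ` of computation encodings. -/
abbrev CSig (Q A : Type) : Type := Q ⊕ A ⊕ (Q × ChanOp A × Q)

/-- Shift all (absolute) time-stamps of a timed word by one time unit. -/
def shift1 {A : Type} (v : List (A × NNReal)) : List (A × NNReal) :=
  v.map fun p => (p.1, p.2 + 1)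

/-- The block of the encoding carrying configuration `i` (out of `n`): the
control state `q i` at time `n - i`, the rule `γ i` at time `t' i`, and the
timed word `v i` encoding the channel content. -/
def chanBlock {Q A : Type} (n : ℕ) (q : ℕ → Q) (γ : ℕ → Q × ChanOp A × Q)
    (t' : ℕ → NNReal) (v : ℕ → List (A × NNReal)) (i : ℕ) :
    List (CSig Q A × NNReal) :=
  (Sum.inl (q i), ((n - i : ℕ) : NNReal)) :: (Sum.inr (Sum.inr (γ i)), t' i) ::
    ((v i).map fun p => (Sum.inr (Sum.inl p.1), p.2))

/-- A lossy computation encoding ending in `(qf, wf)`: a timed word (with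
absolute time-stamps) of the shape
`(q_n,t_n)(γ_n,t'_n)v_n ⋯ (q_1,t_1)(γ_1,t'_1)v_1 (q_0,t_0)`
satisfying the conditions (P1), (P2), (P3a), (P3b), (P3c). -/
def IsLossyEncoding {Q A : Type} (S : ChannelSystem Q A) (qf : Q) (wf : List A)
    (w : List (CSig Q A × NNReal)) : Prop :=
  ∃ (n : ℕ) (q : ℕ → Q) (γ : ℕ → Q × ChanOp A × Q) (t' : ℕ → NNReal)
    (v : ℕ → List (A × NNReal)),
    1 ≤ n ∧
    -- the shape of the word: blocks n, n-1, …, 1, then `q 0` at time `n`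
    w = ((List.range n).map fun j => chanBlock n q γ t' v (n - j)).flatten
        ++ [(Sum.inl (q 0), (n : NNReal))] ∧
    q 0 = S.init ∧ v 0 = [] ∧
    -- (P1) structure
    q n = qf ∧ (v n).map Prod.fst = wf ∧
    (∀ i, 1 ≤ i → i ≤ n →
      γ i ∈ S.rules ∧ (γ i).1 = q (i - 1) ∧ (γ i).2.2 = q i) ∧
    -- (P2) distribution in time
    (∀ i, 1 ≤ i → i ≤ n →
      ((n - i : ℕ) : NNReal) < t' i ∧ t' i < ((n - i : ℕ) : NNReal) + 1 ∧
      List.Chain' (· < ·) (t' i :: (v i).map Prod.snd) ∧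
      ∀ s ∈ (v i).map Prod.snd, s < ((n - i : ℕ) : NNReal) + 1) ∧
    -- (P3a), (P3b), (P3c)
    (∀ i, 1 ≤ i → i ≤ n →
      match (γ i).2.1 with
      | ChanOp.eps => (shift1 (v i)).Sublist (v (i - 1))
      | ChanOp.write a =>
          (∃ u rest, v i = (a, u) :: rest ∧ (shift1 rest).Sublist (v (i - 1))) ∨
          (shift1 (v i)).Sublist (v (i - 1))
      | ChanOp.read a =>
          ∃ (v₁ v₂ : List (A × NNReal)) (t : NNReal),
            v (i - 1) = v₁ ++ (a, t) :: v₂ ∧ (shift1 (v i)).Sublist v₁)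

/-!
Forgetting time-stamps turns an encoding into a lossy computation: by (P3), the channel
contents of consecutive blocks are a lossy step apart. Conversely, encodings are built along
the computation. To append a lossy step, shift every time-stamp one unit later and put the new
block into `[0, 1)`: its rule at half the time-stamp `t'` of the previous first rule, a written
letter at time `t'`, and every surviving letter at the time-stamp its copy had before the shift.
The induction starts from the run without blocks, which ends in `q₀ ≠ q_f`, so the run reaching
`(q_f, w_f)` has at least one block.
-/

open Function
open scoped NNReal

section Encoding

variable {Q A : Type}

theorem List.exists_append_cons_of_append_singleton_sublist_map {α β : Type*} {f : α → β}
    {l : List β} {b : β} {m : List α} (h : (l ++ [b]).Sublist (m.map f)) :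
    ∃ p a r, m = p ++ a :: r ∧ f a = b ∧ l.Sublist (p.map f) := by
  obtain ⟨l', hl', hmap⟩ := List.sublist_map_iff.1 h
  obtain ⟨l₁, l₂, rfl, rfl, hl₂⟩ := List.map_eq_append_iff.1 hmap.symm
  obtain ⟨a, rfl, rfl⟩ := List.map_eq_singleton_iff.1 hl₂
  obtain ⟨r₁, r₂, rfl, hl₁, ha⟩ := List.append_sublist_iff.1 hl'
  obtain ⟨s, r, rfl⟩ := List.append_of_mem (List.singleton_sublist.1 ha)
  exact ⟨r₁ ++ s, a, r, by simp, rfl, (hl₁.trans (List.sublist_append_left _ _)).map f⟩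

@[simp]
theorem shift1_nil : shift1 ([] : List (A × ℝ≥0)) = [] := rfl

@[simp]
theorem shift1_cons (p : A × ℝ≥0) (v : List (A × ℝ≥0)) :
    shift1 (p :: v) = (p.1, p.2 + 1) :: shift1 v := rfl

@[simp]
theorem shift1_append (v w : List (A × ℝ≥0)) : shift1 (v ++ w) = shift1 v ++ shift1 w :=
  List.map_append

@[simp]
theorem map_fst_shift1 (v : List (A × ℝ≥0)) : (shift1 v).map Prod.fst = v.map Prod.fst := by
  simp [shift1]

theorem map_snd_shift1 (v : List (A × ℝ≥0)) :
    (shift1 v).map Prod.snd = (v.map Prod.snd).map (· + 1) := by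
  simp [shift1]

theorem List.Sublist.shift1 {v w : List (A × ℝ≥0)} (h : v.Sublist w) :
    (_root_.shift1 v).Sublist (_root_.shift1 w) :=
  h.map _

/-- Condition (P3) between the timed word `v = v_i` and `v₀ = v_{i-1}`, where `op` is the channel
operation of `γ_i`. -/
def EncodesStep (op : ChanOp A) (v v₀ : List (A × ℝ≥0)) : Prop :=
  match op with
  | .eps => (shift1 v).Sublist v₀
  | .write a => (∃ u rest, v = (a, u) :: rest ∧ (shift1 rest).Sublist v₀) ∨ (shift1 v).Sublist v₀
  | .read a => ∃ v₁ v₂ t, v₀ = v₁ ++ (a, t) :: v₂ ∧ (shift1 v).Sublist v₁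

/-- Condition (P2) for a block starting at time `t₀`: the rule at time `t'`, then the letters
of `v`, all strictly increasing and within `(t₀, t₀ + 1)`. -/
def IsTimedBlock (t₀ t' : ℝ≥0) (v : List (A × ℝ≥0)) : Prop :=
  t₀ < t' ∧ t' < t₀ + 1 ∧ List.IsChain (· < ·) (t' :: v.map Prod.snd) ∧
    ∀ s ∈ v.map Prod.snd, s < t₀ + 1

/-- The data `(q_i, γ_i, t'_i, v_i)` of an encoding with `n` rule blocks, minus the shape of
the timed word and the final configuration. -/
def IsEncodingRun (S : ChannelSystem Q A) (n : ℕ) (q : ℕ → Q) (γ : ℕ → Q × ChanOp A × Q)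
    (t' : ℕ → ℝ≥0) (v : ℕ → List (A × ℝ≥0)) : Prop :=
  q 0 = S.init ∧ v 0 = [] ∧
    ∀ i, 1 ≤ i → i ≤ n →
      (γ i ∈ S.rules ∧ (γ i).1 = q (i - 1) ∧ (γ i).2.2 = q i) ∧
        IsTimedBlock ((n - i : ℕ) : ℝ≥0) (t' i) (v i) ∧ EncodesStep (γ i).2.1 (v i) (v (i - 1))

theorem exists_isLossyEncoding_iff (S : ChannelSystem Q A) (qf : Q) (wf : List A) :
    (∃ w, IsLossyEncoding S qf wf w) ↔
      ∃ n q γ t' v, 1 ≤ n ∧ IsEncodingRun S n q γ t' v ∧ q n = qf ∧ (v n).map Prod.fst = wf := by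
  constructor
  · rintro ⟨w, n, q, γ, t', v, hn, -, hq0, hv0, hqn, hvn, hrule, hblock, hstep⟩
    exact ⟨n, q, γ, t', v, hn,
      ⟨hq0, hv0, fun i h1 hi => ⟨hrule i h1 hi, hblock i h1 hi, hstep i h1 hi⟩⟩, hqn, hvn⟩
  · rintro ⟨n, q, γ, t', v, hn, ⟨hq0, hv0, hrun⟩, hqn, hvn⟩
    exact ⟨_, n, q, γ, t', v, hn, rfl, hq0, hv0, hqn, hvn, fun i h1 hi => (hrun i h1 hi).1,
      fun i h1 hi => (hrun i h1 hi).2.1, fun i h1 hi => (hrun i h1 hi).2.2⟩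

theorem List.Sublist.map_fst_of_shift1 {v w : List (A × ℝ≥0)} (h : (_root_.shift1 v).Sublist w) :
    (v.map Prod.fst).Sublist (w.map Prod.fst) := by
  simpa using h.map Prod.fst

theorem EncodesStep.lossyStep {S : ChannelSystem Q A} {γ : Q × ChanOp A × Q}
    {v v₀ : List (A × ℝ≥0)} (hγ : γ ∈ S.rules) (h : EncodesStep γ.2.1 v v₀) :
    LossyStep S γ (γ.1, v₀.map Prod.fst) (γ.2.2, v.map Prod.fst) := by
  obtain ⟨p, op, p'⟩ := γ
  cases op with
  | eps => exact ⟨_, _, h.map_fst_of_shift1, ⟨hγ, rfl, rfl, rfl⟩, .refl _⟩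
  | write a =>
    rcases h with ⟨u, rest, rfl, hrest⟩ | hv
    · exact ⟨_, _, hrest.map_fst_of_shift1, ⟨hγ, rfl, rfl, rfl⟩, .refl _⟩
    · exact ⟨_, _, hv.map_fst_of_shift1, ⟨hγ, rfl, rfl, rfl⟩, List.sublist_cons_self a _⟩
  | read a =>
    obtain ⟨v₁, v₂, t, rfl, hv⟩ := h
    refine ⟨v.map Prod.fst ++ [a], _, ?_, ⟨hγ, rfl, rfl, rfl⟩, .refl _⟩
    simpa using hv.map_fst_of_shift1.append ((List.nil_sublist _).cons_cons a)

theorem IsEncodingRun.lossyReach {S : ChannelSystem Q A} {n : ℕ} {q : ℕ → Q}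
    {γ : ℕ → Q × ChanOp A × Q} {t' : ℕ → ℝ≥0} {v : ℕ → List (A × ℝ≥0)}
    (h : IsEncodingRun S n q γ t' v) : ∀ i ≤ n, LossyReach S (q i, (v i).map Prod.fst) := by
  obtain ⟨hq0, hv0, hrun⟩ := h
  intro i
  induction i with
  | zero =>
    rw [hq0, hv0]
    exact fun _ => .refl
  | succ i ih =>
    intro hi
    obtain ⟨⟨hγ, hsrc, htgt⟩, -, hstep⟩ := hrun (i + 1) (by omega) hi
    rw [Nat.add_sub_cancel] at hsrc hstep
    refine (ih (by omega)).tail ⟨γ (i + 1), ?_⟩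
    simpa [hsrc, htgt] using hstep.lossyStep hγ

theorem IsTimedBlock.shift1 {t₀ t : ℝ≥0} {v : List (A × ℝ≥0)} (h : IsTimedBlock t₀ t v) :
    IsTimedBlock (t₀ + 1) (t + 1) (_root_.shift1 v) := by
  obtain ⟨h₀, h₁, hchain, hlt⟩ := h
  rw [IsTimedBlock, map_snd_shift1]
  refine ⟨by simpa using h₀, by simpa using h₁, ?_, ?_⟩
  · exact (List.isChain_map (R := (· < ·)) (· + 1)).2 (hchain.imp fun _ _ hab => by simpa using hab)
  · intro _ hs
    obtain ⟨s, hsv, rfl⟩ := List.mem_map.1 hs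
    simpa using hlt s hsv

theorem IsTimedBlock.sublist {t₀ t : ℝ≥0} {v w : List (A × ℝ≥0)} (h : IsTimedBlock t₀ t v)
    (hw : w.Sublist v) : IsTimedBlock t₀ t w :=
  ⟨h.1, h.2.1, h.2.2.1.sublist ((hw.map _).cons_cons t),
    fun s hs => h.2.2.2 s ((hw.map _).subset hs)⟩

theorem IsTimedBlock.lower {t₀ t s : ℝ≥0} {v : List (A × ℝ≥0)} (h : IsTimedBlock t₀ t v)
    (hs : t₀ < s) (hst : s < t) : IsTimedBlock t₀ s v :=
  ⟨hs, hst.trans h.2.1, (h.2.2.1.cons_cons hst).sublist ((List.sublist_cons_self t _).cons_cons s),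
    h.2.2.2⟩

theorem IsTimedBlock.cons {t₀ t s : ℝ≥0} {v : List (A × ℝ≥0)} (h : IsTimedBlock t₀ t v)
    (hs : t₀ < s) (hst : s < t) (a : A) : IsTimedBlock t₀ s ((a, t) :: v) := by
  refine ⟨hs, hst.trans h.2.1, h.2.2.1.cons_cons hst, ?_⟩
  simp only [List.map_cons, List.forall_mem_cons]
  exact ⟨h.2.1, h.2.2.2⟩

theorem EncodesStep.shift1 {op : ChanOp A} {v v₀ : List (A × ℝ≥0)} (h : EncodesStep op v v₀) :
    EncodesStep op (_root_.shift1 v) (_root_.shift1 v₀) := by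
  cases op with
  | eps => exact List.Sublist.shift1 h
  | write a =>
    rcases h with ⟨u, rest, rfl, hrest⟩ | hv
    · exact .inl ⟨u + 1, _root_.shift1 rest, rfl, hrest.shift1⟩
    · exact .inr hv.shift1
  | read a =>
    obtain ⟨v₁, v₂, t, rfl, hv⟩ := h
    exact ⟨_root_.shift1 v₁, _root_.shift1 v₂, t + 1, by simp, hv.shift1⟩

theorem exists_encodesStep_of_lossyStep {S : ChannelSystem Q A} {g : Q × ChanOp A × Q} {p : Q}
    {c : Q × List A} {t₀ t s : ℝ≥0} {v : List (A × ℝ≥0)} (hv : IsTimedBlock t₀ t v)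
    (hs : t₀ < s) (hst : s < t) (h : LossyStep S g (p, v.map Prod.fst) c) :
    ∃ w, w.map Prod.fst = c.2 ∧ IsTimedBlock t₀ s w ∧ EncodesStep g.2.1 w (shift1 v) := by
  obtain ⟨_, op, _⟩ := g
  obtain ⟨u, u', hu, ⟨-, -, -, hop⟩, hc⟩ := h
  cases op with
  | eps =>
    obtain rfl : u' = u := hop
    obtain ⟨w, hw, hwc⟩ := List.sublist_map_iff.1 (hc.trans hu)
    exact ⟨w, hwc.symm, (hv.sublist hw).lower hs hst, hw.shift1⟩
  | write a =>
    obtain rfl : u' = a :: u := hop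
    rcases List.sublist_cons_iff.1 hc with hc | ⟨r, hr, hrc⟩
    · obtain ⟨w, hw, hwc⟩ := List.sublist_map_iff.1 (hc.trans hu)
      exact ⟨w, hwc.symm, (hv.sublist hw).lower hs hst, .inr hw.shift1⟩
    · obtain ⟨w, hw, hwc⟩ := List.sublist_map_iff.1 (hrc.trans hu)
      exact ⟨(a, t) :: w, by simp [hr, hwc], (hv.sublist hw).cons hs hst a,
        .inl ⟨t, w, rfl, hw.shift1⟩⟩
  | read a =>
    obtain rfl : u = u' ++ [a] := hop
    obtain ⟨v₁, ⟨a', t₁⟩, v₂, rfl, rfl, hu'⟩ :=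
      List.exists_append_cons_of_append_singleton_sublist_map hu
    obtain ⟨w, hw, hwc⟩ := List.sublist_map_iff.1 (hc.trans hu')
    exact ⟨w, hwc.symm, (hv.sublist (hw.trans (List.sublist_append_left _ _))).lower hs hst,
      _root_.shift1 v₁, _root_.shift1 v₂, t₁ + 1, by simp, hw.shift1⟩

theorem IsEncodingRun.extend {S : ChannelSystem Q A} {n : ℕ} {q : ℕ → Q}
    {γ : ℕ → Q × ChanOp A × Q} {t' : ℕ → ℝ≥0} {v : ℕ → List (A × ℝ≥0)}
    {g : Q × ChanOp A × Q} {c : Q × List A} (hrun : IsEncodingRun S n q γ t' v)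
    (hlast : IsTimedBlock 0 (t' n) (v n)) (hstep : LossyStep S g (q n, (v n).map Prod.fst) c) :
    ∃ q' γ' t'' v', IsEncodingRun S (n + 1) q' γ' t'' v' ∧ q' (n + 1) = c.1 ∧
      (v' (n + 1)).map Prod.fst = c.2 ∧ IsTimedBlock 0 (t'' (n + 1)) (v' (n + 1)) := by
  obtain ⟨w, hwc, hw, hwstep⟩ :=
    exists_encodesStep_of_lossyStep hlast (half_pos hlast.1) (half_lt_self hlast.1) hstep
  obtain ⟨_, _, _, ⟨hg, hsrc, htgt, _⟩, _⟩ := hstep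
  obtain ⟨hq0, hv0, hblocks⟩ := hrun
  refine ⟨update q (n + 1) c.1, update γ (n + 1) g, update (t' · + 1) (n + 1) (t' n / 2),
    update (shift1 ∘ v) (n + 1) w, ⟨by simpa using hq0, by simp [hv0], fun i hi hin => ?_⟩,
    by simp, by simpa, by simpa⟩
  rcases hin.lt_or_eq with hin | rfl
  · obtain ⟨hrule, hblock, henc⟩ := hblocks i hi (by omega)
    simp only [update_of_ne (by omega : i ≠ n + 1), update_of_ne (by omega : i - 1 ≠ n + 1),
      Function.comp_apply]
    refine ⟨hrule, ?_, henc.shift1⟩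
    rw [show n + 1 - i = n - i + 1 by omega, Nat.cast_succ]
    exact hblock.shift1
  · simp only [update_self, Nat.add_sub_cancel, update_of_ne n.succ_ne_self.symm,
      Function.comp_apply]
    exact ⟨⟨hg, hsrc, htgt⟩, by simpa using hw, hwstep⟩

theorem LossyReach.exists_isEncodingRun {S : ChannelSystem Q A} {c : Q × List A}
    (h : LossyReach S c) :
    ∃ n q γ t' v, IsEncodingRun S n q γ t' v ∧ q n = c.1 ∧ (v n).map Prod.fst = c.2 ∧
      IsTimedBlock 0 (t' n) (v n) := by
  induction h with
  | refl =>
    exact ⟨0, fun _ => S.init, fun _ => (S.init, .eps, S.init), fun _ => 1 / 2, fun _ => [],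
      ⟨rfl, rfl, fun _ _ _ => by omega⟩, rfl, rfl, by norm_num [IsTimedBlock]⟩
  | @tail b c _ hstep ih =>
    obtain ⟨g, hstep⟩ := hstep
    obtain ⟨n, q, γ, t', v, hrun, hqn, hvn, hlast⟩ := ih
    obtain rfl : b = (q n, (v n).map Prod.fst) := Prod.ext hqn.symm hvn.symm
    exact ⟨n + 1, hrun.extend hlast hstep⟩

end Encoding

theorem lossy_computation_iff_encoding_general
    {Q A : Type} (S : ChannelSystem Q A)
    (qf : Q) (wf : List A) (hqf : qf ≠ S.init) :
    LossyReach S (qf, wf) ↔ ∃ w, IsLossyEncoding S qf wf w := by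
  rw [exists_isLossyEncoding_iff]
  constructor
  · intro h
    obtain ⟨n, q, γ, t', v, hrun, hqn, hvn, -⟩ := h.exists_isEncodingRun
    obtain _ | n := n
    · exact absurd (hqn.symm.trans hrun.1) hqf
    · exact ⟨n + 1, q, γ, t', v, n.succ_pos, hrun, hqn, hvn⟩
  · rintro ⟨n, q, γ, t', v, -, hrun, rfl, rfl⟩
    exact hrun.lossyReach n le_rfl

/-- A channel system `S` has a lossy computation ending in
the configuration `(qf, wf)` iff there exists a lossy computation encoding
ending in `(qf, wf)`. -/
theorem lossy_computation_iff_encoding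
    {Q A : Type} [Fintype Q] [Fintype A] (S : ChannelSystem Q A)
    (qf : Q) (wf : List A) (hqf : qf ≠ S.init) :
    LossyReach S (qf, wf) ↔ ∃ w, IsLossyEncoding S qf wf w :=
  lossy_computation_iff_encoding_general S qf wf hqf
end
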